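/- arXiv:1608.03522 — 3 statements merged into one kernel-verified Lean document; each statement's English description precedes it below -/
import Mathlib

section
/- For every integer n ≥ 0, A_{(1,2)}(n) = (A(n+1) − B(n+1))/4; equivalently, 4·A_{(1,2)}(n) + B(n+1) = A(n+1). -/
/-- One step in the random Fibonacci tree; `true` means a right branch:
from the pair `(x, y)`, a right branch leads to `(y, x + y)` and a left
branch leads to `(y, |x - y|)`. -/
def fibStep (p : ℤ × ℤ) (b : Bool) : ℤ × ℤ :=
  if b then (p.2, p.1 + p.2) else (p.2, |p.1 - p.2|)

/-- `fibPairs w i = (g_i, g_{i+1})` for the walk determined by the branch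
sequence `w`, where `w j` is the `(j+1)`-st branch choice. -/
def fibPairs (w : ℕ → Bool) : ℕ → ℤ × ℤ
  | 0 => (1, 1)
  | i + 1 => fibStep (fibPairs w i) (w i)

/-- Extend a branch sequence of length `m` by dummy values. -/
def extendW {m : ℕ} (w : Fin m → Bool) : ℕ → Bool :=
  fun i => if h : i < m then w ⟨i, h⟩ else false

/-- The ending pair `(g_m, g_{m+1})` of the walk determined by a branch
sequence of length `m`. -/
def endPair {m : ℕ} (w : Fin m → Bool) : ℤ × ℤ := fibPairs (extendW w) m

/-- `A(n)`: the number of branch sequences of length `3n` whose walk has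
ending pair `(1,1)`. -/
noncomputable def A11 (n : ℕ) : ℕ :=
  Nat.card {w : Fin (3 * n) → Bool // endPair w = (1, 1)}

/-- `S(n)`: the number of branch sequences of length `3n` whose walk has ending
pair `(1,1)` and no index `1 ≤ i ≤ 3n - 1` with `(g_i, g_{i+1}) = (1,1)`. -/
noncomputable def Sprim (n : ℕ) : ℕ :=
  Nat.card {w : Fin (3 * n) → Bool //
    endPair w = (1, 1) ∧
    ∀ i, 1 ≤ i → i ≤ 3 * n - 1 → fibPairs (extendW w) i ≠ (1, 1)}

/-- `B(n)`: the number of branch sequences of length `3n` whose walk has ending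
pair `(1,1)` and satisfies `g_i ≠ 0` for all `0 ≤ i ≤ 3n + 1`. -/
noncomputable def Bnz (n : ℕ) : ℕ :=
  Nat.card {w : Fin (3 * n) → Bool //
    endPair w = (1, 1) ∧
    ∀ i, i ≤ 3 * n + 1 → (fibPairs (extendW w) i).1 ≠ 0}

/-- `m(a,b)`: `0` if `a, b` both odd, `1` if `a` odd and `b` even,
`2` if `a` even (and `b` odd). -/
def pairOffset (a b : ℕ) : ℕ :=
  if Odd a then (if Odd b then 0 else 1) else 2

/-- `A_{(a,b)}(n)`: the number of branch sequences of length `3n + m(a,b)`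
whose walk has ending pair `(a, b)`. -/
noncomputable def Aab (a b : ℕ) (n : ℕ) : ℕ :=
  Nat.card {w : Fin (3 * n + pairOffset a b) → Bool //
    endPair w = ((a : ℤ), (b : ℤ))}

/-- `SW_{(1,1)}(a,b)`: the least `m` such that some branch sequence of
length `m` has walk with ending pair `(a, b)`. -/
noncomputable def SW (a b : ℕ) : ℕ :=
  sInf {m : ℕ | ∃ w : Fin m → Bool, endPair w = ((a : ℤ), (b : ℤ))}

/-- walk with a general starting pair -/
def mpW (p : ℤ × ℤ) (c : ℕ → Bool) : ℕ → ℤ × ℤ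
  | 0 => p
  | i + 1 => fibStep (mpW p c i) (c i)

lemma fibStep_fst (p : ℤ × ℤ) (b : Bool) : (fibStep p b).1 = p.2 := by
  cases b <;> simp [fibStep]

lemma fibStep_true (p : ℤ × ℤ) : fibStep p true = (p.2, p.1 + p.2) := by simp [fibStep]
lemma fibStep_false (p : ℤ × ℤ) : fibStep p false = (p.2, |p.1 - p.2|) := by simp [fibStep]

lemma fibPairs_eq_mpW (c : ℕ → Bool) : ∀ i, fibPairs c i = mpW (1,1) c i
  | 0 => rfl
  | i+1 => by rw [fibPairs, mpW, fibPairs_eq_mpW c i]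

lemma mpW_succ (p c i) : mpW p c (i+1) = fibStep (mpW p c i) (c i) := rfl

lemma mpW_fst_succ (p c i) : (mpW p c (i+1)).1 = (mpW p c i).2 := fibStep_fst _ _

lemma mpW_congr (p : ℤ × ℤ) (c d : ℕ → Bool) :
    ∀ i, (∀ j, j < i → c j = d j) → mpW p c i = mpW p d i
  | 0, _ => rfl
  | i+1, h => by
      rw [mpW, mpW, mpW_congr p c d i (fun j hj => h j (by omega)), h i (by omega)]

lemma mpW_shift (p : ℤ × ℤ) (c : ℕ → Bool) (m : ℕ) :
    ∀ t, mpW p c (m+t) = mpW (mpW p c m) (fun s => c (m+s)) t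
  | 0 => rfl
  | t+1 => by
      show mpW p c (m+t+1) = _
      rw [mpW, mpW_shift p c m t]; rfl

lemma mpW_nonneg (p : ℤ × ℤ) (c : ℕ → Bool) (hp1 : 0 ≤ p.1) (hp2 : 0 ≤ p.2) :
    ∀ i, 0 ≤ (mpW p c i).1 ∧ 0 ≤ (mpW p c i).2
  | 0 => ⟨hp1, hp2⟩
  | i+1 => by
      obtain ⟨h1, h2⟩ := mpW_nonneg p c hp1 hp2 i
      rw [mpW]
      cases hc : c i
      · rw [fibStep_false]; exact ⟨h2, abs_nonneg _⟩
      · rw [fibStep_true]; exact ⟨h2, add_nonneg h1 h2⟩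

lemma abs_emod_two (a : ℤ) : |a| % 2 = a % 2 := by
  rcases abs_cases a with ⟨h, _⟩ | ⟨h, _⟩ <;> omega

/-- mod-2 step: second coordinate of a step is the sum mod 2 -/
lemma fibStep_snd_emod (p : ℤ × ℤ) (b : Bool) : (fibStep p b).2 % 2 = (p.1 + p.2) % 2 := by
  cases b
  · rw [fibStep_false]; exact (abs_emod_two _).trans (by omega)
  · rw [fibStep_true]

/-- single-walk parity (start (1,1)): first coord even iff i % 3 = 2 -/
lemma gpar (c : ℕ → Bool) :
    ∀ i, ((mpW (1,1) c i).1 % 2 = if i % 3 = 2 then 0 else 1) ∧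
         ((mpW (1,1) c i).2 % 2 = if (i+1) % 3 = 2 then 0 else 1)
  | 0 => by norm_num [mpW]
  | i+1 => by
      obtain ⟨h1, h2⟩ := gpar c i
      have hs := fibStep_snd_emod (mpW (1,1) c i) (c i)
      rw [← mpW_succ] at hs
      refine ⟨by rw [mpW_fst_succ]; exact h2, ?_⟩
      split_ifs at h1 h2 ⊢ <;> omega

/-- parity correlation between walks from (1,1) and (1,2) with the same bits -/
lemma parityCorr (c : ℕ → Bool) :
    ∀ i, (mpW (1,2) c i).1 % 2 = (mpW (1,1) c i).2 % 2 ∧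
         (mpW (1,2) c i).2 % 2 = ((mpW (1,1) c i).1 + (mpW (1,1) c i).2) % 2
  | 0 => by norm_num [mpW]
  | i+1 => by
      obtain ⟨h1, h2⟩ := parityCorr c i
      have e1 := fibStep_snd_emod (mpW (1,2) c i) (c i)
      have e2 := fibStep_snd_emod (mpW (1,1) c i) (c i)
      constructor
      · rw [mpW_fst_succ, mpW_succ, fibStep_snd_emod, h2]
      · rw [mpW_succ, mpW_succ, fibStep_fst]
        omega

lemma mpW_coprime (p : ℤ × ℤ) (c : ℕ → Bool) (hp : IsCoprime p.1 p.2) :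
    ∀ i, IsCoprime (mpW p c i).1 (mpW p c i).2
  | 0 => hp
  | i+1 => by
      have h := mpW_coprime p c hp i
      rw [mpW]
      cases c i
      · rw [fibStep_false]
        have h2 : IsCoprime (mpW p c i).2 ((mpW p c i).1 - (mpW p c i).2) := by
          have := (isCoprime_comm.mp h).add_mul_right_right (-1)
          rw [sub_eq_add_neg]; simpa using this
        rcases abs_cases ((mpW p c i).1 - (mpW p c i).2) with ⟨he, _⟩ | ⟨he, _⟩
        · rw [he]; exact h2
        · rw [he]; exact h2.neg_right
      · rw [fibStep_true]
        have := (isCoprime_comm.mp h).add_mul_right_right 1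
        simpa using this

/-! ### Arithmetic invariants -/

def Ii (x y X Y : ℤ) : Prop :=
  1 ≤ x ∧ 1 ≤ y ∧ x ≤ X ∧ X ≤ 2*x ∧ y ≤ Y ∧ Y ≤ 2*y ∧
    (x*Y - y*X = 1 ∨ x*Y - y*X = -1)

def Kk (x y X Y : ℤ) : Prop :=
  0 ≤ x ∧ 0 ≤ y ∧ 2*x ≤ X ∧ 2*y ≤ Y ∧ (x*Y - y*X = 1 ∨ x*Y - y*X = -1)

lemma int_eq_one_of_mul_eq_one (x t : ℤ) (hx : 0 ≤ x) (h : x * t = 1) : x = 1 := by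
  rcases Int.isUnit_iff.mp (IsUnit.of_mul_eq_one (a := x) t h) with h' | h' <;> omega

lemma S1t (x y X Y : ℤ) (h : Ii x y X Y) : Ii y (x+y) Y (X+Y) := by
  obtain ⟨h1, h2, h3, h4, h5, h6, hd⟩ := h
  refine ⟨h2, by linarith, h5, h6, by linarith, by linarith, ?_⟩
  rcases hd with hd | hd
  · right; linear_combination -hd
  · left; linear_combination -hd

lemma S1f (x y X Y : ℤ) (h : Ii x y X Y) (hpar : X % 2 = y % 2) :
    Ii y |x-y| Y |X-Y| ∨ (x = 1 ∧ y = 1 ∧ X = 1 ∧ Y = 2) := by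
  obtain ⟨h1, h2, h3, h4, h5, h6, hd⟩ := h
  rcases lt_trichotomy x y with hxy | hxy | hxy
  · -- x < y
    left
    have huv : X - x ≤ Y - y := by
      by_contra hc
      push_neg at hc
      have e : -(x*Y - y*X) = (y-x)*(Y-y) + y*((X-x)-(Y-y)) := by ring
      have k1 : 0 ≤ (y-x)*(Y-y) := mul_nonneg (by linarith) (by linarith)
      have k2 : y*1 ≤ y*((X-x)-(Y-y)) :=
        mul_le_mul_of_nonneg_left (by linarith) (by linarith)
      rcases hd with hd | hd <;> linarith
    have hvu2 : Y - X ≤ 2*(y-x) := by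
      by_contra hc
      push_neg at hc
      have e : (x*Y - y*X) = (y-x)*(2*y-Y) + y*((2*x-X)-(2*y-Y)) := by ring
      have k1 : 0 ≤ (y-x)*(2*y-Y) := mul_nonneg (by linarith) (by linarith)
      have k2 : y*1 ≤ y*((2*x-X)-(2*y-Y)) :=
        mul_le_mul_of_nonneg_left (by linarith) (by linarith)
      rcases hd with hd | hd <;> linarith
    rw [abs_sub_comm x y, abs_sub_comm X Y,
      abs_of_pos (by linarith : (0:ℤ) < y - x), abs_of_pos (by linarith : (0:ℤ) < Y - X)]
    refine ⟨h2, by linarith, h5, h6, by linarith, by linarith, ?_⟩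
    rcases hd with hd | hd
    · left; linear_combination hd
    · right; linear_combination hd
  · -- x = y
    right
    subst hxy
    have hx1 : x = 1 := by
      rcases hd with hd | hd
      · exact int_eq_one_of_mul_eq_one x (Y - X) (by linarith) (by linear_combination hd)
      · exact int_eq_one_of_mul_eq_one x (X - Y) (by linarith) (by linear_combination -hd)
    subst hx1
    rcases hd with hd | hd <;> refine ⟨rfl, rfl, by omega, by omega⟩
  · -- y < x
    left
    have huv : Y - y ≤ X - x := by
      by_contra hc
      push_neg at hc
      have e : (x*Y - y*X) = (x-y)*(X-x) + x*((Y-y)-(X-x)) := by ring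
      have k1 : 0 ≤ (x-y)*(X-x) := mul_nonneg (by linarith) (by linarith)
      have k2 : x*1 ≤ x*((Y-y)-(X-x)) :=
        mul_le_mul_of_nonneg_left (by linarith) (by linarith)
      rcases hd with hd | hd <;> linarith
    have hvu2 : X - Y ≤ 2*(x-y) := by
      by_contra hc
      push_neg at hc
      have e : -(x*Y - y*X) = (x-y)*(2*x-X) + x*((2*y-Y)-(2*x-X)) := by ring
      have k1 : 0 ≤ (x-y)*(2*x-X) := mul_nonneg (by linarith) (by linarith)
      have k2 : x*1 ≤ x*((2*y-Y)-(2*x-X)) :=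
        mul_le_mul_of_nonneg_left (by linarith) (by linarith)
      rcases hd with hd | hd <;> linarith
    rw [abs_of_pos (by linarith : (0:ℤ) < x - y), abs_of_pos (by linarith : (0:ℤ) < X - Y)]
    refine ⟨h2, by linarith, h5, h6, by linarith, by linarith, ?_⟩
    rcases hd with hd | hd
    · right; linear_combination -hd
    · left; linear_combination -hd

lemma S2t (x y X Y : ℤ) (h : Kk x y X Y) : Kk y (x+y) Y (X+Y) := by
  obtain ⟨h1, h2, h3, h4, hd⟩ := h
  refine ⟨h2, by linarith, h4, by linarith, ?_⟩
  rcases hd with hd | hd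
  · right; linear_combination -hd
  · left; linear_combination -hd

lemma S2f (x y X Y : ℤ) (h : Kk x y X Y)
    (hpar2 : Y % 2 = (x+y) % 2) :
    Kk y |x-y| Y |X-Y| ∨ (Y = 1 ∧ |X-Y| = 1) := by
  obtain ⟨h1, h2, h3, h4, hd⟩ := h
  rcases lt_trichotomy x y with hxy | hxy | hxy
  · -- x < y, y ≥ 1, expect Y > X
    have hy1 : 1 ≤ y := by linarith
    have hXY : X < Y := by
      by_contra hc
      push_neg at hc
      have e : -(x*Y - y*X) = (y-x)*(Y-y) + y*((X-x)-(Y-y)) := by ring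
      have k1 : 1*1 ≤ (y-x)*(Y-y) :=
        mul_le_mul (by linarith) (by linarith) (by norm_num) (by linarith)
      have k2 : y*1 ≤ y*((X-x)-(Y-y)) :=
        mul_le_mul_of_nonneg_left (by linarith) (by linarith)
      rcases hd with hd | hd <;> linarith
    by_cases h2c : 2*(y-x) ≤ Y - X
    · left
      rw [abs_sub_comm x y, abs_sub_comm X Y,
        abs_of_pos (by linarith : (0:ℤ) < y - x), abs_of_pos (by linarith : (0:ℤ) < Y - X)]
      refine ⟨h2, by linarith, h4, h2c, ?_⟩
      rcases hd with hd | hd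
      · left; linear_combination hd
      · right; linear_combination hd
    · exfalso
      push_neg at h2c
      have e3 : -(x*Y - y*X) = y*(X-Y+2*y-2*x-1) + (y-x)*(Y-2*y) + y := by ring
      have t1 : 0 ≤ X-Y+2*y-2*x-1 := by linarith
      have t2 : 0 ≤ Y-2*y := by linarith
      have k1 : 0 ≤ y*(X-Y+2*y-2*x-1) := mul_nonneg (by linarith) t1
      have k2 : 0 ≤ (y-x)*(Y-2*y) := mul_nonneg (by linarith) t2
      have hy : y = 1 := by rcases hd with hd | hd <;> nlinarith
      have hx : x = 0 := by linarith
      subst hy; subst hx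
      have hY : Y = 2 := by rcases hd with hd | hd <;> nlinarith
      omega
  · -- x = y
    subst hxy
    have hx1 : x = 1 := by
      rcases hd with hd | hd
      · exact int_eq_one_of_mul_eq_one x (Y - X) (by linarith) (by linear_combination hd)
      · exact int_eq_one_of_mul_eq_one x (X - Y) (by linarith) (by linear_combination -hd)
    subst hx1
    left
    have habs : |X - Y| = 1 := by
      rcases hd with hd | hd
      · rw [abs_sub_comm, abs_of_pos (by linarith : (0:ℤ) < Y - X)]; linarith
      · rw [abs_of_pos (by linarith : (0:ℤ) < X - Y)]; linarith
    rw [habs, sub_self, abs_zero]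
    exact ⟨by norm_num, by norm_num, by linarith, by norm_num, Or.inl (by ring)⟩
  · -- y < x, x ≥ 1, expect X > Y
    have hx1 : 1 ≤ x := by linarith
    have hXY : Y < X := by
      by_contra hc
      push_neg at hc
      have e : (x*Y - y*X) = (x-y)*(X-x) + x*((Y-y)-(X-x)) := by ring
      have k1 : 1*1 ≤ (x-y)*(X-x) :=
        mul_le_mul (by linarith) (by linarith) (by norm_num) (by linarith)
      have k2 : x*1 ≤ x*((Y-y)-(X-x)) :=
        mul_le_mul_of_nonneg_left (by linarith) (by linarith)
      rcases hd with hd | hd <;> linarith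
    by_cases h2c : 2*(x-y) ≤ X - Y
    · left
      rw [abs_of_pos (by linarith : (0:ℤ) < x - y), abs_of_pos (by linarith : (0:ℤ) < X - Y)]
      refine ⟨h2, by linarith, h4, h2c, ?_⟩
      rcases hd with hd | hd
      · right; linear_combination -hd
      · left; linear_combination -hd
    · right
      push_neg at h2c
      have e3 : x*Y - y*X = x*(Y-X+2*x-2*y-1) + (x-y)*(X-2*x) + x := by ring
      have t1 : 0 ≤ Y-X+2*x-2*y-1 := by linarith
      have t2 : 0 ≤ X-2*x := by linarith
      have k1 : 0 ≤ x*(Y-X+2*x-2*y-1) := mul_nonneg (by linarith) t1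
      have k2 : 0 ≤ (x-y)*(X-2*x) := mul_nonneg (by linarith) t2
      have hx : x = 1 := by rcases hd with hd | hd <;> nlinarith
      have hy : y = 0 := by linarith
      subst hx; subst hy
      have hY : Y = 1 := by rcases hd with hd | hd <;> nlinarith
      have hX : X = 2 := by rcases hd with hd | hd <;> nlinarith
      rw [hX, hY]
      norm_num

lemma E1 (x y : ℤ) (h : Ii x y 1 2) : x = 1 ∧ y = 1 := by
  obtain ⟨h1, h2, h3, h4, h5, h6, hd⟩ := h
  rcases hd with hd | hd <;> omega

lemma E2 (x y : ℤ) (h : Ii x y 1 1) : False := by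
  obtain ⟨h1, h2, h3, h4, h5, h6, hd⟩ := h
  rcases hd with hd | hd <;> omega

lemma E3 (x y : ℤ) (h : Kk x y 1 1) : False := by
  obtain ⟨h1, h2, h3, h4, hd⟩ := h
  rcases hd with hd | hd <;> omega

lemma E4 (x y : ℤ) (h : Kk x y 1 2) (hpar : (2:ℤ) % 2 = (x+y) % 2) : False := by
  obtain ⟨h1, h2, h3, h4, hd⟩ := h
  rcases hd with hd | hd <;> omega

lemma E6 (X Y : ℤ) (h : Ii 1 1 X Y) (hpar : X % 2 = 1) : X = 1 ∧ Y = 2 := by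
  obtain ⟨h1, h2, h3, h4, h5, h6, hd⟩ := h
  rcases hd with hd | hd <;> omega

lemma E5 : Ii 1 1 1 2 := by norm_num [Ii]

lemma K0 : Kk 1 0 2 1 := by norm_num [Kk]

/-! ### Walk-level invariants -/

def IiP (p q : ℤ × ℤ) : Prop := Ii p.1 p.2 q.1 q.2
def KkP (p q : ℤ × ℤ) : Prop := Kk p.1 p.2 q.1 q.2

lemma stepI (p q : ℤ × ℤ) (h : IiP p q) (hpar : q.1 % 2 = p.2 % 2) (b : Bool) :
    IiP (fibStep p b) (fibStep q b) ∨
      ((fibStep p b).2 = 0 ∧ KkP (fibStep p b) (fibStep q b)) := by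
  cases b
  · rw [fibStep_false, fibStep_false]
    rcases S1f p.1 p.2 q.1 q.2 h hpar with h' | ⟨hx, hy, hX, hY⟩
    · left; exact h'
    · right
      rw [IiP] at h
      constructor
      · show |p.1 - p.2| = 0
        rw [hx, hy]; norm_num
      · show Kk p.2 |p.1 - p.2| q.2 |q.1 - q.2|
        rw [hx, hy, hX, hY]; norm_num [Kk]
  · rw [fibStep_true, fibStep_true]
    exact Or.inl (S1t _ _ _ _ h)

lemma stepK (p q : ℤ × ℤ) (h : KkP p q) (hpar2 : q.2 % 2 = (p.1 + p.2) % 2) (b : Bool) :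
    KkP (fibStep p b) (fibStep q b) ∨ fibStep q b = (1, 1) := by
  cases b
  · rw [fibStep_false, fibStep_false]
    rcases S2f p.1 p.2 q.1 q.2 h hpar2 with h' | ⟨hY, hA⟩
    · left; exact h'
    · right; rw [Prod.ext_iff]; exact ⟨hY, hA⟩
  · rw [fibStep_true, fibStep_true]
    exact Or.inl (S2t _ _ _ _ h)

lemma Fwd (c : ℕ → Bool) (N : ℕ) (hz : ∀ i, i ≤ N → 1 ≤ (mpW (1,1) c i).2) :
    ∀ i, i ≤ N → IiP (mpW (1,1) c i) (mpW (1,2) c i) := by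
  intro i
  induction i with
  | zero => intro _; exact E5
  | succ i ih =>
      intro hi
      have prev := ih (by omega)
      have hpar := (parityCorr c i).1
      rcases stepI _ _ prev hpar (c i) with h' | ⟨h0, _⟩
      · exact h'
      · exact absurd (hz (i+1) hi) (by rw [mpW_succ, h0]; norm_num)

lemma FwdMain (c : ℕ → Bool) (N : ℕ) (hz : ∀ i, i ≤ N → 1 ≤ (mpW (1,1) c i).2)
    (hend : mpW (1,1) c N = (1,1)) :
    mpW (1,2) c N = (1,2) ∧ ∀ t, t ≤ N → mpW (1,2) c t ≠ (1,1) := by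
  constructor
  · have h := Fwd c N hz N le_rfl
    rw [IiP, hend] at h
    have hpar := (parityCorr c N).1
    rw [hend] at hpar
    have hpar' : (mpW (1,2) c N).1 % 2 = 1 := by
      rw [hpar]; norm_num
    obtain ⟨hX, hY⟩ := E6 _ _ h hpar'
    exact Prod.ext hX hY
  · intro t ht hq
    have h := Fwd c N hz t ht
    rw [IiP, hq] at h
    exact E2 _ _ h

lemma Bwd (c : ℕ → Bool) (N : ℕ) (hav : ∀ i, i ≤ N → mpW (1,2) c i ≠ (1,1)) :
    ∀ i, i ≤ N →
      (∀ t, t ≤ i → IiP (mpW (1,1) c t) (mpW (1,2) c t)) ∨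
        KkP (mpW (1,1) c i) (mpW (1,2) c i) := by
  intro i
  induction i with
  | zero =>
      intro _
      left
      intro t ht
      interval_cases t
      exact E5
  | succ i ih =>
      intro hi
      rcases ih (by omega) with hall | hK
      · rcases stepI _ _ (hall i le_rfl) ((parityCorr c i).1) (c i) with h' | ⟨_, hK'⟩
        · left
          intro t ht
          rcases Nat.lt_or_ge t (i+1) with h | h
          · exact hall t (by omega)
          · have : t = i + 1 := by omega
            subst this
            exact h'
        · right
          exact hK'
      · rcases stepK _ _ hK ((parityCorr c i).2) (c i) with hK' | h11
        · right; exact hK'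
        · exact absurd h11 (hav (i+1) hi)

lemma BwdMain (c : ℕ → Bool) (N : ℕ) (hav : ∀ i, i ≤ N → mpW (1,2) c i ≠ (1,1))
    (hend : mpW (1,2) c N = (1,2)) :
    mpW (1,1) c N = (1,1) ∧
      (∀ t, t ≤ N → 1 ≤ (mpW (1,1) c t).1 ∧ 1 ≤ (mpW (1,1) c t).2) := by
  rcases Bwd c N hav N le_rfl with hall | hK
  · have h := hall N le_rfl
    rw [IiP, hend] at h
    obtain ⟨hx, hy⟩ := E1 _ _ h
    refine ⟨Prod.ext hx hy, ?_⟩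
    intro t ht
    have h := hall t ht
    rw [IiP] at h
    exact ⟨h.1, h.2.1⟩
  · exfalso
    rw [KkP, hend] at hK
    have hpar := (parityCorr c N).2
    rw [hend] at hpar
    exact E4 _ _ hK hpar

/-! ### fibPairs utilities -/

lemma fibPairs_congr (c d : ℕ → Bool) (i : ℕ) (h : ∀ j, j < i → c j = d j) :
    fibPairs c i = fibPairs d i := by
  rw [fibPairs_eq_mpW, fibPairs_eq_mpW]; exact mpW_congr _ _ _ i h

lemma fibPairs_shift (c : ℕ → Bool) (m : ℕ) (p : ℤ × ℤ) (hm : fibPairs c m = p) (s : ℕ) :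
    fibPairs c (m+s) = mpW p (fun t => c (m+t)) s := by
  rw [fibPairs_eq_mpW] at hm ⊢
  rw [mpW_shift, hm]

lemma fibPairs_nonneg (c : ℕ → Bool) (i : ℕ) :
    0 ≤ (fibPairs c i).1 ∧ 0 ≤ (fibPairs c i).2 := by
  rw [fibPairs_eq_mpW]
  exact mpW_nonneg _ _ (by norm_num) (by norm_num) i

lemma fibPairs_fst_succ (c : ℕ → Bool) (i : ℕ) :
    (fibPairs c (i+1)).1 = (fibPairs c i).2 := fibStep_fst _ _

lemma fibPairs_parity (c : ℕ → Bool) (i : ℕ) :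
    ((fibPairs c i).1 % 2 = if i % 3 = 2 then 0 else 1) ∧
      ((fibPairs c i).2 % 2 = if (i+1) % 3 = 2 then 0 else 1) := by
  rw [fibPairs_eq_mpW]; exact gpar c i

lemma fibPairs_zero_mod (c : ℕ → Bool) (i : ℕ) (h : (fibPairs c i).1 = 0) : i % 3 = 2 := by
  have hp := (fibPairs_parity c i).1
  rw [h] at hp
  by_contra hc
  rw [if_neg hc] at hp
  norm_num at hp

lemma fibPairs_ne_11 (c : ℕ → Bool) (i : ℕ) (h : ¬ (i % 3 = 0)) : fibPairs c i ≠ (1,1) := by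
  intro he
  obtain ⟨h1, h2⟩ := fibPairs_parity c i
  rw [he] at h1 h2
  have h3 : i % 3 < 3 := Nat.mod_lt _ (by norm_num)
  split_ifs at h1 h2 <;> simp at h1 h2 <;> omega

lemma fibPairs_coprime (c : ℕ → Bool) (i : ℕ) :
    IsCoprime (fibPairs c i).1 (fibPairs c i).2 := by
  rw [fibPairs_eq_mpW]
  exact mpW_coprime _ _ isCoprime_one_left i

lemma corr1 : fibStep ((1:ℤ), (1:ℤ)) false = (1, 0) := by norm_num [fibStep]
lemma corr2 (b : Bool) : fibStep ((1:ℤ), (0:ℤ)) b = (0, 1) := by cases b <;> norm_num [fibStep]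
lemma corr3 (b : Bool) : fibStep ((0:ℤ), (1:ℤ)) b = (1, 1) := by cases b <;> norm_num [fibStep]
lemma stepR11 : fibStep ((1:ℤ), (1:ℤ)) true = (1, 2) := by norm_num [fibStep]

/-! ### Splicing -/

def spliceF (k : ℕ) (b1 b2 : Bool) (v : ℕ → Bool) : ℕ → Bool :=
  fun i => if i < 3*k then v i else if i = 3*k then false
    else if i = 3*k+1 then b1 else if i = 3*k+2 then b2 else v (i-2)

def spliceG (k : ℕ) (w : ℕ → Bool) : ℕ → Bool :=
  fun i => if i < 3*k then w i else if i = 3*k then true else w (i+2)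

/-! ### Main splice lemma, F direction -/

lemma LemF (n k : ℕ) (hk : k ≤ n) (v : ℕ → Bool) (b1 b2 : Bool)
    (hend : fibPairs v (3*n+1) = (1, 2))
    (h3k : fibPairs v (3*k) = (1, 1))
    (hmax : ∀ m, k < m → m ≤ n → fibPairs v (3*m) ≠ (1, 1)) :
    v (3*k) = true ∧
    fibPairs (spliceF k b1 b2 v) (3*n+3) = (1, 1) ∧
    (fibPairs (spliceF k b1 b2 v) (3*k+2)).1 = 0 ∧
    (∀ m, k < m → m ≤ n → (fibPairs (spliceF k b1 b2 v) (3*m+2)).1 ≠ 0) := by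
  -- step 0 : the bit at 3k is `true`
  have hvb : v (3*k) = true := by
    by_contra hb
    rw [Bool.not_eq_true] at hb
    have e1 : fibPairs v (3*k+1) = (1, 0) := by
      rw [fibPairs, hb, h3k, corr1]
    have e2 : fibPairs v (3*k+2) = (0, 1) := by
      rw [fibPairs, e1, corr2]
    have e3 : fibPairs v (3*k+3) = (1, 1) := by
      rw [fibPairs, e2, corr3]
    rcases Nat.lt_or_ge k n with hkn | hkn
    · exact hmax (k+1) (by omega) (by omega) (by rw [show 3*(k+1) = 3*k+3 by ring]; exact e3)
    · have hkn' : k = n := by omega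
      subst hkn'
      rw [e1] at hend
      simp at hend
  -- the D-suffix
  set c : ℕ → Bool := fun t => v (3*k+1+t) with hc
  set N : ℕ := 3*(n-k) with hN
  have hv1 : fibPairs v (3*k+1) = (1, 2) := by
    rw [fibPairs, hvb, h3k, stepR11]
  have hshift : ∀ s, fibPairs v (3*k+1+s) = mpW (1,2) c s :=
    fibPairs_shift v (3*k+1) (1,2) hv1
  have havS : ∀ s, s ≤ N → mpW (1,2) c s ≠ (1, 1) := by
    intro s hs
    rw [← hshift]
    rcases Nat.eq_zero_or_pos s with h0 | hpos
    · subst h0; rw [show 3*k+1+0 = 3*k+1 by ring, hv1]; simp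
    · by_cases h3 : (3*k+1+s) % 3 = 0
      · obtain ⟨m, hm⟩ : ∃ m, 3*k+1+s = 3*m := ⟨(3*k+1+s)/3, by omega⟩
        rw [hm]
        exact hmax m (by omega) (by omega)
      · exact fibPairs_ne_11 v _ h3
  have hendS : mpW (1,2) c N = (1, 2) := by
    rw [← hshift, show 3*k+1+N = 3*n+1 by omega]
    exact hend
  obtain ⟨hgend, hgpos⟩ := BwdMain c N havS hendS
  -- the walk of w
  set w : ℕ → Bool := spliceF k b1 b2 v with hw
  have e0 : fibPairs w (3*k) = (1, 1) := by
    rw [fibPairs_congr w v (3*k) (fun j hj => by simp [hw, spliceF, hj])]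
    exact h3k
  have e1 : fibPairs w (3*k+1) = (1, 0) := by
    rw [fibPairs, e0, show w (3*k) = false by simp [hw, spliceF], corr1]
  have e2 : fibPairs w (3*k+2) = (0, 1) := by
    rw [fibPairs, e1, corr2]
  have e3 : fibPairs w (3*k+3) = (1, 1) := by
    rw [fibPairs, e2, corr3]
  have hcw : (fun t => w (3*k+3+t)) = c := by
    funext t
    show w (3*k+3+t) = v (3*k+1+t)
    have h1 : ¬(3*k+3+t < 3*k) := by omega
    have h2 : ¬(3*k+3+t = 3*k) := by omega
    have h3 : ¬(3*k+3+t = 3*k+1) := by omega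
    have h4 : ¬(3*k+3+t = 3*k+2) := by omega
    simp only [hw, spliceF, if_neg h1, if_neg h2, if_neg h3, if_neg h4]
    congr 1
    omega
  have eS : ∀ s, fibPairs w (3*k+3+s) = mpW (1,1) c s := by
    intro s
    rw [fibPairs_shift w (3*k+3) (1,1) e3 s, hcw]
  refine ⟨hvb, ?_, ?_, ?_⟩
  · rw [show 3*n+3 = 3*k+3+N by omega, eS]
    exact hgend
  · rw [e2]
  · intro m hm1 hm2
    obtain ⟨s, hs1, hs2⟩ : ∃ s, 3*m+2 = 3*k+3+s ∧ s ≤ N := ⟨3*m+2-(3*k+3), by omega, by omega⟩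
    rw [hs1, eS]
    have := (hgpos s hs2).1
    omega

/-! ### Main splice lemma, G direction -/

lemma LemG (n k : ℕ) (hk : k ≤ n) (w : ℕ → Bool)
    (hend : fibPairs w (3*n+3) = (1, 1))
    (hz : (fibPairs w (3*k+2)).1 = 0)
    (hnz : ∀ m, k < m → m ≤ n → (fibPairs w (3*m+2)).1 ≠ 0) :
    w (3*k) = false ∧
    fibPairs w (3*k) = (1, 1) ∧
    fibPairs (spliceG k w) (3*n+1) = (1, 2) ∧
    fibPairs (spliceG k w) (3*k) = (1, 1) ∧
    (∀ m, k < m → m ≤ n → fibPairs (spliceG k w) (3*m) ≠ (1, 1)) := by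
  -- pair at 3k is (1,1) and the bit is false
  have hz1 : (fibPairs w (3*k+1)).2 = 0 := by
    rw [← fibPairs_fst_succ]
    exact hz
  obtain ⟨hx0, hy0⟩ := fibPairs_nonneg w (3*k)
  have hxodd := (fibPairs_parity w (3*k)).1
  rw [if_neg (by omega : ¬ (3*k) % 3 = 2)] at hxodd
  have hb : w (3*k) = false := by
    by_contra hb
    rw [Bool.not_eq_false] at hb
    rw [fibPairs, hb, fibStep_true] at hz1
    simp only at hz1
    omega
  have hxy : (fibPairs w (3*k)).1 = (fibPairs w (3*k)).2 := by
    rw [fibPairs, hb, fibStep_false] at hz1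
    simp only at hz1
    have := abs_eq_zero.mp hz1
    omega
  have hx1 : (fibPairs w (3*k)).1 = 1 := by
    obtain ⟨u, vv, huv⟩ := fibPairs_coprime w (3*k)
    rw [← hxy] at huv
    exact int_eq_one_of_mul_eq_one _ (u + vv) hx0 (by linear_combination huv)
  have h3k : fibPairs w (3*k) = (1, 1) := Prod.ext hx1 (by omega)
  have e1 : fibPairs w (3*k+1) = (1, 0) := by
    rw [fibPairs, hb, h3k, corr1]
  have e2 : fibPairs w (3*k+2) = (0, 1) := by
    rw [fibPairs, e1, corr2]
  have e3 : fibPairs w (3*k+3) = (1, 1) := by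
    rw [fibPairs, e2, corr3]
  -- the zero-free suffix
  set c : ℕ → Bool := fun t => w (3*k+3+t) with hc
  set N : ℕ := 3*(n-k) with hN
  have eS : ∀ s, fibPairs w (3*k+3+s) = mpW (1,1) c s :=
    fibPairs_shift w (3*k+3) (1,1) e3
  have hzS : ∀ s, s ≤ N → 1 ≤ (mpW (1,1) c s).2 := by
    intro s hs
    have h1 : (mpW (1,1) c s).2 = (fibPairs w (3*k+4+s)).1 := by
      rw [show 3*k+4+s = (3*k+3+s)+1 by ring, fibPairs_fst_succ, eS]
    rw [h1]
    have hnn := (fibPairs_nonneg w (3*k+4+s)).1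
    have hne : (fibPairs w (3*k+4+s)).1 ≠ 0 := by
      intro h0
      have hmod := fibPairs_zero_mod w _ h0
      obtain ⟨m, hm⟩ : ∃ m, 3*k+4+s = 3*m+2 := ⟨(3*k+2+s)/3, by omega⟩
      rw [hm] at h0
      exact hnz m (by omega) (by omega) h0
    omega
  have hgend : mpW (1,1) c N = (1, 1) := by
    rw [← eS, show 3*k+3+N = 3*n+3 by omega]
    exact hend
  obtain ⟨hhend, hhav⟩ := FwdMain c N hzS hgend
  -- the walk of v
  set v : ℕ → Bool := spliceG k w with hv
  have f0 : fibPairs v (3*k) = (1, 1) := by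
    rw [fibPairs_congr v w (3*k) (fun j hj => by simp [hv, spliceG, hj])]
    exact h3k
  have f1 : fibPairs v (3*k+1) = (1, 2) := by
    rw [fibPairs, f0, show v (3*k) = true by simp [hv, spliceG], stepR11]
  have hcv : (fun t => v (3*k+1+t)) = c := by
    funext t
    show v (3*k+1+t) = w (3*k+3+t)
    have h1 : ¬(3*k+1+t < 3*k) := by omega
    have h2 : ¬(3*k+1+t = 3*k) := by omega
    simp only [hv, spliceG, if_neg h1, if_neg h2]
    congr 1
    omega
  have fS : ∀ s, fibPairs v (3*k+1+s) = mpW (1,2) c s := by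
    intro s
    rw [fibPairs_shift v (3*k+1) (1,2) f1 s, hcv]
  refine ⟨hb, h3k, ?_, f0, ?_⟩
  · rw [show 3*n+1 = 3*k+1+N by omega, fS]
    exact hhend
  · intro m hm1 hm2
    obtain ⟨s, hs1, hs2⟩ : ∃ s, 3*m = 3*k+1+s ∧ s ≤ N := ⟨3*m-(3*k+1), by omega, by omega⟩
    rw [hs1, fS]
    exact hhav s hs2

/-! ### The bijection -/

def TVn (n : ℕ) := {v : Fin (3*n+1) → Bool // endPair v = ((1:ℤ), (2:ℤ))}

def ZFn (n : ℕ) (w : Fin (3*(n+1)) → Bool) : Prop :=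
  ∀ i, i ≤ 3*(n+1)+1 → (fibPairs (extendW w) i).1 ≠ 0

def TCn (n : ℕ) := {w : Fin (3*(n+1)) → Bool // endPair w = ((1:ℤ),(1:ℤ)) ∧ ¬ ZFn n w}

def kVn (n : ℕ) (v : ℕ → Bool) : ℕ :=
  Nat.findGreatest (fun m => fibPairs v (3*m) = (1,1)) n

def kWn (n : ℕ) (w : ℕ → Bool) : ℕ :=
  Nat.findGreatest (fun m => (fibPairs w (3*m+2)).1 = 0) n

lemma extendW_restrict (M : ℕ) (g : ℕ → Bool) (j : ℕ) (h : j < M) :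
    extendW (fun i : Fin M => g i.val) j = g j := dif_pos h

lemma extendW_val {m : ℕ} (f : Fin m → Bool) (j : ℕ) (h : j < m) :
    extendW f j = f ⟨j, h⟩ := dif_pos h

/-- basic facts about `kVn` for a member of `TVn` -/
lemma kV_facts (n : ℕ) (v : TVn n) :
    kVn n (extendW v.1) ≤ n ∧
    fibPairs (extendW v.1) (3*(kVn n (extendW v.1))) = (1,1) ∧
    (∀ m, kVn n (extendW v.1) < m → m ≤ n → fibPairs (extendW v.1) (3*m) ≠ (1,1)) := by
  unfold kVn
  refine ⟨?_, ?_, ?_⟩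
  · exact Nat.findGreatest_le (P := fun m => fibPairs (extendW v.1) (3*m) = (1,1)) n
  · exact Nat.findGreatest_spec (P := fun m => fibPairs (extendW v.1) (3*m) = (1,1))
      (Nat.zero_le n) rfl
  · intro m h1 h2
    exact Nat.findGreatest_is_greatest (P := fun m => fibPairs (extendW v.1) (3*m) = (1,1)) h1 h2

lemma TV_end (n : ℕ) (v : TVn n) : fibPairs (extendW v.1) (3*n+1) = (1, 2) := v.2

/-- The forward data: all of LemF applied to a member of TVn -/
lemma F_all (n : ℕ) (b1 b2 : Bool) (v : TVn n) :
    extendW v.1 (3*(kVn n (extendW v.1))) = true ∧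
    fibPairs (spliceF (kVn n (extendW v.1)) b1 b2 (extendW v.1)) (3*n+3) = (1, 1) ∧
    (fibPairs (spliceF (kVn n (extendW v.1)) b1 b2 (extendW v.1)) (3*(kVn n (extendW v.1))+2)).1 = 0 ∧
    (∀ m, kVn n (extendW v.1) < m → m ≤ n →
      (fibPairs (spliceF (kVn n (extendW v.1)) b1 b2 (extendW v.1)) (3*m+2)).1 ≠ 0) := by
  obtain ⟨hk, h3k, hmax⟩ := kV_facts n v
  exact LemF n _ hk (extendW v.1) b1 b2 (TV_end n v) h3k hmax

def Ffin (n : ℕ) (b1 b2 : Bool) (v : TVn n) : Fin (3*(n+1)) → Bool :=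
  fun i => spliceF (kVn n (extendW v.1)) b1 b2 (extendW v.1) i.val

lemma Ffin_congr (n : ℕ) (b1 b2 : Bool) (v : TVn n) (j : ℕ) (hj : j ≤ 3*n+3) :
    fibPairs (extendW (Ffin n b1 b2 v)) j
      = fibPairs (spliceF (kVn n (extendW v.1)) b1 b2 (extendW v.1)) j := by
  apply fibPairs_congr
  intro t ht
  exact extendW_restrict (3*(n+1)) _ t (by omega)

lemma F_mem (n : ℕ) (b1 b2 : Bool) (v : TVn n) :
    endPair (Ffin n b1 b2 v) = ((1:ℤ),(1:ℤ)) ∧ ¬ ZFn n (Ffin n b1 b2 v) := by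
  obtain ⟨ha, hb, hc, hd⟩ := F_all n b1 b2 v
  have hk := (kV_facts n v).1
  constructor
  · show fibPairs (extendW (Ffin n b1 b2 v)) (3*n+3) = ((1:ℤ),(1:ℤ))
    rw [Ffin_congr n b1 b2 v _ le_rfl]
    exact hb
  · intro hall
    refine hall (3*(kVn n (extendW v.1))+2) (by omega) ?_
    rw [Ffin_congr n b1 b2 v _ (by omega)]
    exact hc

/-- basic facts about `kWn` for a member of `TCn` -/
lemma kW_facts (n : ℕ) (y : TCn n) :
    kWn n (extendW y.1) ≤ n ∧
    (fibPairs (extendW y.1) (3*(kWn n (extendW y.1))+2)).1 = 0 ∧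
    (∀ m, kWn n (extendW y.1) < m → m ≤ n →
      (fibPairs (extendW y.1) (3*m+2)).1 ≠ 0) := by
  unfold kWn
  refine ⟨?_, ?_, ?_⟩
  · exact Nat.findGreatest_le (P := fun m => (fibPairs (extendW y.1) (3*m+2)).1 = 0) n
  · have hex := y.2.2
    rw [ZFn] at hex
    push_neg at hex
    obtain ⟨i, hi, h0⟩ := hex
    have hmod := fibPairs_zero_mod _ _ h0
    obtain ⟨m, hm, hmn⟩ : ∃ m, i = 3*m+2 ∧ m ≤ n := ⟨(i-2)/3, by omega, by omega⟩
    subst hm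
    exact Nat.findGreatest_spec (P := fun m => (fibPairs (extendW y.1) (3*m+2)).1 = 0) hmn h0
  · intro m h1 h2
    exact Nat.findGreatest_is_greatest (P := fun m => (fibPairs (extendW y.1) (3*m+2)).1 = 0) h1 h2

lemma TC_end (n : ℕ) (y : TCn n) : fibPairs (extendW y.1) (3*n+3) = (1, 1) := y.2.1

/-- The backward data: all of LemG applied to a member of TCn -/
lemma G_all (n : ℕ) (y : TCn n) :
    extendW y.1 (3*(kWn n (extendW y.1))) = false ∧
    fibPairs (extendW y.1) (3*(kWn n (extendW y.1))) = (1, 1) ∧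
    fibPairs (spliceG (kWn n (extendW y.1)) (extendW y.1)) (3*n+1) = (1, 2) ∧
    fibPairs (spliceG (kWn n (extendW y.1)) (extendW y.1)) (3*(kWn n (extendW y.1))) = (1, 1) ∧
    (∀ m, kWn n (extendW y.1) < m → m ≤ n →
      fibPairs (spliceG (kWn n (extendW y.1)) (extendW y.1)) (3*m) ≠ (1, 1)) := by
  obtain ⟨hk, hz, hnz⟩ := kW_facts n y
  exact LemG n _ hk (extendW y.1) (TC_end n y) hz hnz

def Gfin (n : ℕ) (y : TCn n) : Fin (3*n+1) → Bool :=
  fun i => spliceG (kWn n (extendW y.1)) (extendW y.1) i.val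

lemma Gfin_congr (n : ℕ) (y : TCn n) (j : ℕ) (hj : j ≤ 3*n+1) :
    fibPairs (extendW (Gfin n y)) j
      = fibPairs (spliceG (kWn n (extendW y.1)) (extendW y.1)) j := by
  apply fibPairs_congr
  intro t ht
  exact extendW_restrict (3*n+1) _ t (by omega)

lemma G_mem (n : ℕ) (y : TCn n) : endPair (Gfin n y) = ((1:ℤ),(2:ℤ)) := by
  show fibPairs (extendW (Gfin n y)) (3*n+1) = ((1:ℤ),(2:ℤ))
  rw [Gfin_congr n y (3*n+1) le_rfl]
  exact (G_all n y).2.2.1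

/-! ### splice access lemmas -/

lemma spliceF_lt (k : ℕ) (b1 b2 : Bool) (v : ℕ → Bool) (i : ℕ) (h : i < 3*k) :
    spliceF k b1 b2 v i = v i := if_pos h

lemma spliceF_eq0 (k : ℕ) (b1 b2 : Bool) (v : ℕ → Bool) :
    spliceF k b1 b2 v (3*k) = false := by
  unfold spliceF; rw [if_neg (lt_irrefl _), if_pos rfl]

lemma spliceF_eq1 (k : ℕ) (b1 b2 : Bool) (v : ℕ → Bool) :
    spliceF k b1 b2 v (3*k+1) = b1 := by
  unfold spliceF; rw [if_neg (by omega), if_neg (by omega), if_pos rfl]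

lemma spliceF_eq2 (k : ℕ) (b1 b2 : Bool) (v : ℕ → Bool) :
    spliceF k b1 b2 v (3*k+2) = b2 := by
  unfold spliceF; rw [if_neg (by omega), if_neg (by omega), if_neg (by omega), if_pos rfl]

lemma spliceF_ge (k : ℕ) (b1 b2 : Bool) (v : ℕ → Bool) (i : ℕ) (h : 3*k+3 ≤ i) :
    spliceF k b1 b2 v i = v (i-2) := by
  unfold spliceF
  rw [if_neg (by omega), if_neg (by omega), if_neg (by omega), if_neg (by omega)]

lemma spliceG_lt (k : ℕ) (w : ℕ → Bool) (i : ℕ) (h : i < 3*k) :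
    spliceG k w i = w i := if_pos h

lemma spliceG_eq (k : ℕ) (w : ℕ → Bool) : spliceG k w (3*k) = true := by
  unfold spliceG; rw [if_neg (lt_irrefl _), if_pos rfl]

lemma spliceG_gt (k : ℕ) (w : ℕ → Bool) (i : ℕ) (h : 3*k < i) :
    spliceG k w i = w (i+2) := by
  unfold spliceG; rw [if_neg (by omega), if_neg (by omega)]

/-! ### the equivalence -/

def Ffull (n : ℕ) (x : (Bool × Bool) × TVn n) : TCn n :=
  ⟨Ffin n x.1.1 x.1.2 x.2, F_mem n x.1.1 x.1.2 x.2⟩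

def Gfull (n : ℕ) (y : TCn n) : (Bool × Bool) × TVn n :=
  ((extendW y.1 (3*(kWn n (extendW y.1))+1), extendW y.1 (3*(kWn n (extendW y.1))+2)),
   ⟨Gfin n y, G_mem n y⟩)

lemma kW_of_F (n : ℕ) (b1 b2 : Bool) (v : TVn n) :
    kWn n (extendW (Ffin n b1 b2 v)) = kVn n (extendW v.1) := by
  obtain ⟨ha, hb, hc, hd⟩ := F_all n b1 b2 v
  have hk := (kV_facts n v).1
  rw [kWn, Nat.findGreatest_eq_iff]
  refine ⟨hk, fun _ => ?_, fun m h1 h2 hP => ?_⟩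
  · rw [Ffin_congr n b1 b2 v _ (by omega)]
    exact hc
  · rw [Ffin_congr n b1 b2 v _ (by omega)] at hP
    exact hd m h1 h2 hP

lemma kV_of_G (n : ℕ) (y : TCn n) :
    kVn n (extendW (Gfin n y)) = kWn n (extendW y.1) := by
  obtain ⟨ga, gb, gc, gd, ge⟩ := G_all n y
  have hk := (kW_facts n y).1
  rw [kVn, Nat.findGreatest_eq_iff]
  refine ⟨hk, fun _ => ?_, fun m h1 h2 hP => ?_⟩
  · rw [Gfin_congr n y _ (by omega)]
    exact gd
  · rw [Gfin_congr n y _ (by omega)] at hP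
    exact ge m h1 h2 hP

lemma left_inv_FG (n : ℕ) (x : (Bool × Bool) × TVn n) : Gfull n (Ffull n x) = x := by
  obtain ⟨⟨b1, b2⟩, v⟩ := x
  obtain ⟨ha, hb, hc, hd⟩ := F_all n b1 b2 v
  have hk := (kV_facts n v).1
  set k := kVn n (extendW v.1) with hkdef
  have hkW : kWn n (extendW (Ffin n b1 b2 v)) = k := kW_of_F n b1 b2 v
  have hwe : ∀ j, j < 3*(n+1) →
      extendW (Ffin n b1 b2 v) j = spliceF k b1 b2 (extendW v.1) j := by
    intro j hj
    show extendW (fun i : Fin (3*(n+1)) => spliceF k b1 b2 (extendW v.1) i.val) j = _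
    exact extendW_restrict (3*(n+1)) (spliceF k b1 b2 (extendW v.1)) j hj
  refine Prod.ext (Prod.ext ?_ ?_) (Subtype.ext (funext fun i => ?_))
  · show extendW (Ffin n b1 b2 v) (3*(kWn n (extendW (Ffin n b1 b2 v)))+1) = b1
    rw [hkW, hwe _ (by omega), spliceF_eq1]
  · show extendW (Ffin n b1 b2 v) (3*(kWn n (extendW (Ffin n b1 b2 v)))+2) = b2
    rw [hkW, hwe _ (by omega), spliceF_eq2]
  · show spliceG (kWn n (extendW (Ffin n b1 b2 v))) (extendW (Ffin n b1 b2 v)) i.val = v.1 i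
    rw [hkW]
    have hiv : (i : ℕ) < 3*n+1 := i.isLt
    rcases lt_trichotomy (i : ℕ) (3*k) with hlt | heq | hgt
    · rw [spliceG_lt _ _ _ hlt, hwe _ (by omega), spliceF_lt _ _ _ _ _ hlt,
        extendW_val v.1 _ hiv]
    · rw [heq, spliceG_eq]
      rw [heq] at hiv
      rw [extendW_val v.1 _ hiv] at ha
      rw [show i = (⟨3*k, hiv⟩ : Fin (3*n+1)) from Fin.ext heq]
      exact ha.symm
    · rw [spliceG_gt _ _ _ hgt, hwe _ (by omega), spliceF_ge _ _ _ _ _ (by omega),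
        show (i : ℕ) + 2 - 2 = (i : ℕ) by omega, extendW_val v.1 _ hiv]

lemma right_inv_FG (n : ℕ) (y : TCn n) : Ffull n (Gfull n y) = y := by
  obtain ⟨ga, gb, gc, gd, ge⟩ := G_all n y
  have hk := (kW_facts n y).1
  set k := kWn n (extendW y.1) with hkdef
  have hkV : kVn n (extendW (Gfin n y)) = k := kV_of_G n y
  have hve : ∀ j, j < 3*n+1 →
      extendW (Gfin n y) j = spliceG k (extendW y.1) j := by
    intro j hj
    show extendW (fun i : Fin (3*n+1) => spliceG k (extendW y.1) i.val) j = _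
    exact extendW_restrict (3*n+1) (spliceG k (extendW y.1)) j hj
  apply Subtype.ext
  funext i
  show spliceF (kVn n (extendW (Gfin n y))) (extendW y.1 (3*k+1)) (extendW y.1 (3*k+2))
      (extendW (Gfin n y)) i.val = y.1 i
  rw [hkV]
  have hiv : (i : ℕ) < 3*(n+1) := i.isLt
  have hy : ∀ (j : ℕ) (h : j < 3*(n+1)), extendW y.1 j = y.1 ⟨j, h⟩ :=
    fun j h => extendW_val y.1 j h
  rcases lt_trichotomy (i : ℕ) (3*k) with hlt | heq | hgt
  · rw [spliceF_lt _ _ _ _ _ hlt, hve _ (by omega), spliceG_lt _ _ _ hlt, hy _ hiv]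
  · rw [heq, spliceF_eq0]
    rw [hy _ (by omega : 3*k < 3*(n+1))] at ga
    rw [show i = (⟨3*k, by omega⟩ : Fin (3*(n+1))) from Fin.ext heq]
    exact ga.symm
  · rcases Nat.lt_or_ge (i : ℕ) (3*k+3) with hsm | hbg
    · rcases Nat.lt_or_ge (i : ℕ) (3*k+2) with h1 | h2
      · have he : (i : ℕ) = 3*k+1 := by omega
        rw [he, spliceF_eq1, hy _ (by omega)]
        exact congrArg y.1 (Fin.ext he.symm)
      · have he : (i : ℕ) = 3*k+2 := by omega
        rw [he, spliceF_eq2, hy _ (by omega)]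
        exact congrArg y.1 (Fin.ext he.symm)
    · rw [spliceF_ge _ _ _ _ _ hbg, hve _ (by omega), spliceG_gt _ _ _ (by omega),
        show (i : ℕ) - 2 + 2 = (i : ℕ) by omega, hy _ hiv]

noncomputable def mainEquiv (n : ℕ) : ((Bool × Bool) × TVn n) ≃ TCn n where
  toFun := Ffull n
  invFun := Gfull n
  left_inv := left_inv_FG n
  right_inv := right_inv_FG n


open Classical in
noncomputable def splitEquiv {α : Type*} (P Q : α → Prop) :
    {x // P x} ≃ {x // P x ∧ Q x} ⊕ {x // P x ∧ ¬ Q x} where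
  toFun x := if h : Q x.1 then Sum.inl ⟨x.1, x.2, h⟩ else Sum.inr ⟨x.1, x.2, h⟩
  invFun y := Sum.elim (fun a => ⟨a.1, a.2.1⟩) (fun a => ⟨a.1, a.2.1⟩) y
  left_inv x := by by_cases h : Q x.1 <;> simp [h]
  right_inv y := by
    rcases y with a | a
    · simp only [Sum.elim_inl]
      simp [a.2.2]
    · simp only [Sum.elim_inr]
      simp [a.2.2]

lemma step1 (n : ℕ) : A11 (n+1) = Bnz (n+1) + Nat.card (TCn n) := by
  rw [A11,
    Nat.card_congr (splitEquiv (fun w : Fin (3*(n+1)) → Bool => endPair w = (1,1)) (ZFn n)),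
    Nat.card_sum]
  rfl

lemma step2 (n : ℕ) : Nat.card (TCn n) = 4 * Nat.card (TVn n) := by
  rw [← Nat.card_congr (mainEquiv n), Nat.card_prod]
  have : Nat.card (Bool × Bool) = 4 := by
    rw [Nat.card_prod, Nat.card_eq_fintype_card, Fintype.card_bool]
  rw [this]

lemma Aab_eq_TV (n : ℕ) : Aab 1 2 n = Nat.card (TVn n) := by
  rw [Aab]
  have hoff : pairOffset 1 2 = 1 := by norm_num [pairOffset]
  rw [hoff]
  apply Nat.card_congr
  apply Equiv.subtypeEquivRight
  intro w
  norm_num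

lemma key_identity (n : ℕ) : A11 (n+1) = Bnz (n+1) + 4 * Aab 1 2 n := by
  rw [step1, step2, Aab_eq_TV]

/-- For every `n ≥ 0`, `A_{(1,2)}(n) = (A(n+1) − B(n+1))/4`;
equivalently `4·A_{(1,2)}(n) + B(n+1) = A(n+1)`. -/
theorem Aab_one_two (n : ℕ) :
    (Aab 1 2 n : ℚ) = ((A11 (n + 1) : ℚ) - Bnz (n + 1)) / 4 ∧
    4 * Aab 1 2 n + Bnz (n + 1) = A11 (n + 1) := by
  have key := key_identity n
  constructor
  · have hq : ((A11 (n+1) : ℕ) : ℚ) = ((Bnz (n+1) : ℕ) : ℚ) + 4 * ((Aab 1 2 n : ℕ) : ℚ) := by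
      exact_mod_cast congrArg (Nat.cast : ℕ → ℚ) key
    rw [hq]; ring
  · omega
end

section
/- For every integer n ≥ 0, Σ_{k=0}^{n} (1/(2k+1))·C(3k, k)·(1/(2(n−k)+1))·C(3(n−k), n−k) = (2/(3n+2))·C(3n+2, n), where C denotes the binomial coefficient. (Equivalently, Σ_{k=0}^{n} B(k)·B(n−k) = S(n+1) for n ≥ 1, where B(k) = C(3k,k)/(2k+1) and S(m) = (2/(3m−1))·C(3m−1, m−1).) -/


noncomputable def tB (k : ℕ) : ℚ := (Nat.choose (3 * k) k : ℚ) / (2 * (k : ℚ) + 1)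

noncomputable def sB (n : ℕ) : ℚ := 2 / (3 * (n : ℚ) + 2) * Nat.choose (3 * n + 2) n

lemma tB_formula (k : ℕ) :
    tB k = ((3 * k).factorial : ℚ) / ((2 * (k : ℚ) + 1) * (k.factorial : ℚ) * ((2 * k).factorial : ℚ)) := by
  have h := Nat.cast_choose ℚ (show k ≤ 3 * k by omega)
  have h2 : 3 * k - k = 2 * k := by omega
  rw [h2] at h
  rw [tB, h]
  have hk : ((k.factorial : ℚ)) ≠ 0 := by exact_mod_cast k.factorial_ne_zero
  have h2k : (((2 * k).factorial : ℚ)) ≠ 0 := by exact_mod_cast (2 * k).factorial_ne_zero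
  have h3 : (2 * (k : ℚ) + 1) ≠ 0 := by positivity
  rw [div_div]
  ring_nf

lemma tB_succ (k : ℕ) :
    tB (k + 1) = tB k * (3 * (3 * (k : ℚ) + 1) * (3 * (k : ℚ) + 2)) / (2 * ((k : ℚ) + 1) * (2 * (k : ℚ) + 3)) := by
  have e1 : (3 * (k + 1)).factorial = (3 * k + 3) * ((3 * k + 2) * ((3 * k + 1) * (3 * k).factorial)) := by
    rw [show 3 * (k + 1) = 3 * k + 1 + 1 + 1 by ring]
    simp [Nat.factorial_succ]
  have e2 : (k + 1).factorial = (k + 1) * k.factorial := Nat.factorial_succ k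
  have e3 : (2 * (k + 1)).factorial = (2 * k + 2) * ((2 * k + 1) * (2 * k).factorial) := by
    rw [show 2 * (k + 1) = 2 * k + 1 + 1 by ring]
    simp [Nat.factorial_succ]
  rw [tB_formula, tB_formula, e1, e2, e3]
  have hk : ((k.factorial : ℚ)) ≠ 0 := by exact_mod_cast k.factorial_ne_zero
  have h2k : (((2 * k).factorial : ℚ)) ≠ 0 := by exact_mod_cast (2 * k).factorial_ne_zero
  have h3k : (((3 * k).factorial : ℚ)) ≠ 0 := by exact_mod_cast (3 * k).factorial_ne_zero
  have h3 : (2 * (k : ℚ) + 1) ≠ 0 := by positivity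
  have h4 : (2 * (k : ℚ) + 3) ≠ 0 := by positivity
  have h5 : ((k : ℚ) + 1) ≠ 0 := by positivity
  push_cast
  field_simp
  ring

lemma sB_succ (n : ℕ) :
    sB (n + 1) = sB n * (3 * (3 * (n : ℚ) + 2) * (3 * (n : ℚ) + 4)) / (2 * ((n : ℚ) + 2) * (2 * (n : ℚ) + 3)) := by
  have hc1 := Nat.cast_choose ℚ (show n ≤ 3 * n + 2 by omega)
  have hc2 := Nat.cast_choose ℚ (show n + 1 ≤ 3 * (n + 1) + 2 by omega)
  have h1 : 3 * n + 2 - n = 2 * n + 2 := by omega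
  have h2 : 3 * (n + 1) + 2 - (n + 1) = 2 * n + 4 := by omega
  rw [h1] at hc1; rw [h2] at hc2
  have e1 : (3 * (n + 1) + 2).factorial
      = (3 * n + 5) * ((3 * n + 4) * ((3 * n + 3) * (3 * n + 2).factorial)) := by
    rw [show 3 * (n + 1) + 2 = 3 * n + 2 + 1 + 1 + 1 by ring]
    simp [Nat.factorial_succ]
  have e2 : (n + 1).factorial = (n + 1) * n.factorial := Nat.factorial_succ n
  have e3 : (2 * n + 4).factorial = (2 * n + 4) * ((2 * n + 3) * (2 * n + 2).factorial) := by
    rw [show 2 * n + 4 = 2 * n + 2 + 1 + 1 by ring]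
    simp [Nat.factorial_succ]
  rw [sB, sB, hc1, hc2, e1, e2, e3]
  have hk : ((n.factorial : ℚ)) ≠ 0 := by exact_mod_cast n.factorial_ne_zero
  have h2k : (((2 * n + 2).factorial : ℚ)) ≠ 0 := by exact_mod_cast (2 * n + 2).factorial_ne_zero
  have h3k : (((3 * n + 2).factorial : ℚ)) ≠ 0 := by exact_mod_cast (3 * n + 2).factorial_ne_zero
  have h3 : (3 * (n : ℚ) + 2) ≠ 0 := by positivity
  have h4 : (3 * (n : ℚ) + 5) ≠ 0 := by positivity
  have h5 : ((n : ℚ) + 1) ≠ 0 := by positivity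
  have h6 : ((n : ℚ) + 2) ≠ 0 := by positivity
  have h7 : (2 * (n : ℚ) + 3) ≠ 0 := by positivity
  push_cast
  field_simp
  ring

noncomputable def rC (n : ℕ) : ℚ :=
  3 * (3 * (n : ℚ) + 2) * (3 * (n : ℚ) + 4) / (2 * ((n : ℚ) + 2) * (2 * (n : ℚ) + 3))

noncomputable def RC (n k : ℕ) : ℚ :=
  (k : ℚ) * (2 * (k : ℚ) + 1) * (2 * (k : ℚ) - 3 * (n : ℚ) - 4)
    / (((n : ℚ) + 1) * ((n : ℚ) + 2) * (2 * (n : ℚ) + 3))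

lemma keyBB (j k : ℕ) :
    tB k * tB (j + 1) - rC (j + k) * (tB k * tB j)
      = RC (j + k) (k + 1) * tB (k + 1) * tB j - RC (j + k) k * (tB k * tB (j + 1)) := by
  rw [tB_succ j, tB_succ k, rC, RC, RC]
  have h1 : (2 * ((j : ℚ) + 1) * (2 * (j : ℚ) + 3)) ≠ 0 := by positivity
  have h2 : (2 * ((k : ℚ) + 1) * (2 * (k : ℚ) + 3)) ≠ 0 := by positivity
  have h3 : ((((j + k : ℕ) : ℚ)) + 1) ≠ 0 := by positivity
  have h4 : ((((j + k : ℕ) : ℚ)) + 2) ≠ 0 := by positivity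
  have h5 : (2 * (((j + k : ℕ) : ℚ)) + 3) ≠ 0 := by positivity
  push_cast
  push_cast at h3 h4 h5
  field_simp
  ring

lemma tB_zero : tB 0 = 1 := by simp [tB]

lemma RC_top (n : ℕ) : RC n (n + 1) = -1 := by
  have h3 : (((n : ℚ)) + 1) ≠ 0 := by positivity
  have h4 : (((n : ℚ)) + 2) ≠ 0 := by positivity
  have h5 : (2 * ((n : ℚ)) + 3) ≠ 0 := by positivity
  rw [RC]
  push_cast
  field_simp
  ring

lemma mainBB (n : ℕ) : ∑ k ∈ Finset.range (n + 1), tB k * tB (n - k) = sB n := by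
  induction n with
  | zero => simp [tB, sB]
  | succ n ih =>
    have hstep : ∀ k ∈ Finset.range (n + 1),
        tB k * tB (n + 1 - k)
          = rC n * (tB k * tB (n - k))
            + ((fun k => RC n k * tB k * tB (n + 1 - k)) (k + 1)
              - (fun k => RC n k * tB k * tB (n + 1 - k)) k) := by
      intro k hk
      have hk' : k ≤ n := Finset.mem_range_succ_iff.mp hk
      have h1 : n + 1 - k = (n - k) + 1 := by omega
      have h2 : n + 1 - (k + 1) = n - k := by omega
      have hjk : (n - k) + k = n := by omega
      have hkey := keyBB (n - k) k
      rw [hjk] at hkey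
      simp only [h1, h2]
      linarith [hkey]
    rw [Finset.sum_range_succ, Finset.sum_congr rfl hstep, Finset.sum_add_distrib,
      Finset.sum_range_sub (fun k => RC n k * tB k * tB (n + 1 - k)), ← Finset.mul_sum, ih]
    have hG0 : RC n 0 * tB 0 * tB (n + 1 - 0) = 0 := by simp [RC]
    have hGtop : RC n (n + 1) * tB (n + 1) * tB (n + 1 - (n + 1)) = -tB (n + 1) := by
      rw [RC_top]
      simp [tB_zero]
    have hsub : n + 1 - (n + 1) = 0 := by omega
    rw [hG0, hGtop, hsub, tB_zero, sB_succ, rC]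
    ring

/-- For every `n ≥ 0`,
`Σ_{k=0}^{n} (1/(2k+1))·C(3k,k)·(1/(2(n−k)+1))·C(3(n−k), n−k)
  = (2/(3n+2))·C(3n+2, n)`. -/
theorem BB_convolution (n : ℕ) :
    ∑ k ∈ Finset.range (n + 1),
        ((1 : ℚ) / (2 * (k : ℚ) + 1)) * Nat.choose (3 * k) k
          * ((1 : ℚ) / (2 * ((n - k : ℕ) : ℚ) + 1)) * Nat.choose (3 * (n - k)) (n - k)
      = (2 / (3 * (n : ℚ) + 2)) * Nat.choose (3 * n + 2) n := by
  have h := mainBB n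
  rw [sB] at h
  rw [← h]
  apply Finset.sum_congr rfl
  intro k hk
  rw [tB, tB]
  ring
end

section
/- For every integer n ≥ 0, A(n+2) − 16·A(n+1) + 64·A(n) = B(n+2) + 4·S(n+2); equivalently, A(n+2) + 64·A(n) = 16·A(n+1) + B(n+2) + 4·S(n+2). -/
namespace FibAux

variable {σ : Type} [DecidableEq σ]

/-- Generic count of walks of length `m` from `p` that end in a state
satisfying `e`, with all non-final states satisfying `s`. -/
def cnt (t : σ → Bool → σ) (s e : σ → Bool) : σ → ℕ → ℕ
  | p, 0 => if e p then 1 else 0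
  | p, m+1 => if s p then cnt t s e (t p true) m + cnt t s e (t p false) m else 0

omit [DecidableEq σ] in
lemma cnt_congr (t : σ → Bool → σ) {s s' e : σ → Bool} (h : ∀ q, s q = s' q) :
    ∀ m p, cnt t s e p m = cnt t s' e p m := by
  intro m
  induction m with
  | zero => intro p; rfl
  | succ m ih => intro p; simp only [cnt, h p, ih]

omit [DecidableEq σ] in
lemma cnt_succ_of_safe (t : σ → Bool → σ) (s e : σ → Bool) {p : σ} (hs : s p = true) (m : ℕ) :
    cnt t s e p (m+1) = cnt t s e (t p true) m + cnt t s e (t p false) m := by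
  simp [cnt, hs]

omit [DecidableEq σ] in
lemma cnt_succ_of_unsafe (t : σ → Bool → σ) (s e : σ → Bool) {p : σ} (hs : s p = false) (m : ℕ) :
    cnt t s e p (m+1) = 0 := by
  simp [cnt, hs]

/-- Renewal (first-visit-to-`z`) decomposition. -/
lemma renewal (t : σ → Bool → σ) (s : σ → Bool) (z : σ) :
    ∀ m p, cnt t s (fun q => decide (q = z)) p m
      = ∑ k ∈ Finset.range (m+1),
          cnt t (fun q => s q && !decide (q = z)) (fun q => decide (q = z)) p k *
            cnt t s (fun q => decide (q = z)) z (m - k) := by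
  intro m
  induction m with
  | zero =>
    intro p
    by_cases hp : p = z <;> simp [cnt, hp]
  | succ m ih =>
    intro p
    rw [Finset.sum_range_succ']
    by_cases hp : p = z
    · subst hp
      have h0 : ∀ k, cnt t (fun q => s q && !decide (q = p)) (fun q => decide (q = p)) p (k+1) = 0 := by
        intro k; simp [cnt]
      simp [h0, cnt]
    · have h0 : cnt t (fun q => s q && !decide (q = z)) (fun q => decide (q = z)) p 0 = 0 := by
        simp [cnt, hp]
      by_cases hs : s p
      · have hrec : ∀ k, cnt t (fun q => s q && !decide (q = z)) (fun q => decide (q = z)) p (k+1)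
            = cnt t (fun q => s q && !decide (q = z)) (fun q => decide (q = z)) (t p true) k
              + cnt t (fun q => s q && !decide (q = z)) (fun q => decide (q = z)) (t p false) k := by
          intro k
          exact cnt_succ_of_safe t _ _ (by simp [hs, hp]) k
        rw [cnt_succ_of_safe t _ _ hs, ih (t p true), ih (t p false)]
        simp only [hrec, Nat.succ_sub_succ, add_mul, Finset.sum_add_distrib, h0, zero_mul, add_zero]
      · have hs' : s p = false := by simpa using hs
        rw [cnt_succ_of_unsafe t _ _ hs']
        have h1 : ∀ k, cnt t (fun q => s q && !decide (q = z)) (fun q => decide (q = z)) p (k+1) = 0 := by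
          intro k; exact cnt_succ_of_unsafe t _ _ (by simp [hs']) k
        simp [h1, h0]


lemma band_decide {p q r : Prop} [Decidable p] [Decidable q] [Decidable r]
    (h : (p ∧ ¬ q) ↔ r) : (decide p && !decide q) = decide r := by
  by_cases hp : p <;> by_cases hq : q <;> simp_all

/-! ### The `+2 / -1` chain -/

def tC (h : ℤ) (b : Bool) : ℤ := if b then h + 2 else h - 1

/-- `cntC l z h m`: paths of length `m` from `h`, all non-final heights `≥ l`,
ending at `z`. -/
def cntC (l z : ℤ) (h : ℤ) (m : ℕ) : ℕ :=
  cnt tC (fun x => decide (l ≤ x)) (fun x => decide (x = z)) h m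

lemma cnt_eq_cntC (l z h : ℤ) (m : ℕ) :
    cnt tC (fun x => decide (l ≤ x)) (fun x => decide (x = z)) h m = cntC l z h m := rfl

lemma tC_true (h : ℤ) : tC h true = h + 2 := rfl
lemma tC_false (h : ℤ) : tC h false = h - 1 := rfl

lemma cntC_shift (l z : ℤ) (c : ℤ) : ∀ m h, cntC (l + c) (z + c) (h + c) m = cntC l z h m := by
  intro m
  induction m with
  | zero =>
    intro h
    simp only [cntC, cnt]
    congr 1
    simp [decide_eq_decide]
  | succ m ih =>
    intro h
    by_cases hs : l ≤ h
    · rw [cntC, cnt_succ_of_safe _ _ _ (by simp; omega), cntC,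
        cnt_succ_of_safe _ _ _ (by simp [hs])]
      rw [tC_true, tC_true, tC_false, tC_false]
      simp only [cnt_eq_cntC]
      have e1 : h + c + 2 = (h + 2) + c := by ring
      have e2 : h + c - 1 = (h - 1) + c := by ring
      rw [e1, e2, ih, ih]
    · rw [cntC, cnt_succ_of_unsafe _ _ _ (by simp; omega), cntC,
        cnt_succ_of_unsafe _ _ _ (by simp; omega)]

lemma cntC_stuck {l z h : ℤ} (hl : ¬ l ≤ h) (m : ℕ) :
    cntC l z h m = if m = 0 ∧ h = z then 1 else 0 := by
  cases m with
  | zero => by_cases hz : h = z <;> simp [cntC, cnt, hz]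
  | succ m => rw [cntC, cnt_succ_of_unsafe _ _ _ (by simp [hl])]; simp

/-- First-passage decomposition: paths from `p ≥ 2` to `0` staying `≥ 1`
decompose at the first visit to `1`. -/
lemma chainFH : ∀ m (p : ℤ), 2 ≤ p →
    cntC 1 0 p m = ∑ k ∈ Finset.range (m+1), cntC 2 1 p k * cntC 1 0 1 (m - k) := by
  intro m
  induction m with
  | zero =>
    intro p hp
    have h1 : cntC 1 0 p 0 = 0 := by simp [cntC, cnt]; omega
    have h2 : cntC 2 1 p 0 = 0 := by simp [cntC, cnt]; omega
    simp [h1, h2]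
  | succ m ih =>
    intro p hp
    rw [Finset.sum_range_succ']
    have h2 : cntC 2 1 p 0 = 0 := by simp [cntC, cnt]; omega
    have hrec : ∀ k, cntC 2 1 p (k+1) = cntC 2 1 (p+2) k + cntC 2 1 (p-1) k := by
      intro k
      rw [cntC, cnt_succ_of_safe _ _ _ (by simp [hp]), tC_true, tC_false]
      simp only [cnt_eq_cntC]
    rw [cntC, cnt_succ_of_safe _ _ _ (by simp; omega), tC_true, tC_false]
    simp only [cnt_eq_cntC]
    simp only [hrec, Nat.succ_sub_succ, add_mul, Finset.sum_add_distrib, h2, zero_mul, add_zero]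
    congr 1
    · exact ih (p+2) (by omega)
    · by_cases hp2 : 2 ≤ p - 1
      · exact ih (p-1) hp2
      · have hp1 : p - 1 = 1 := by omega
        rw [hp1]
        have hone : ∀ k, cntC 2 1 1 k = if k = 0 then 1 else 0 := by
          intro k
          cases k with
          | zero => simp [cntC, cnt]
          | succ k => rw [cntC, cnt_succ_of_unsafe _ _ _ (by simp)]; simp
        rw [Finset.sum_eq_single 0 (by intro b _ hb; simp [hone, hb]) (by simp)]
        simp [hone]

/-- `Fc m`: first passage from `1` to `0` (staying `≥ 1` before the end). -/
def Fc (m : ℕ) : ℕ := cntC 1 0 1 m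

lemma cntC_two (k : ℕ) : cntC 1 0 2 k = ∑ i ∈ Finset.range (k+1), Fc i * Fc (k - i) := by
  rw [chainFH k 2 (by norm_num)]
  refine Finset.sum_congr rfl fun i _ => ?_
  congr 1
  simpa [Fc] using cntC_shift 1 0 1 i 1

/-- Coefficient identity: `F(m+1) = [m = 0] + (F*F*F)(m)`. -/
lemma Fc_succ (m : ℕ) : Fc (m+1)
    = (if m = 0 then 1 else 0)
      + ∑ k ∈ Finset.range (m+1), (∑ i ∈ Finset.range (k+1), Fc i * Fc (k - i)) * Fc (m - k) := by
  rw [Fc, cntC, cnt_succ_of_safe _ _ _ (by simp), tC_true, tC_false]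
  simp only [cnt_eq_cntC]
  have e1 : (1:ℤ) + 2 = 3 := by norm_num
  have e2 : (1:ℤ) - 1 = 0 := by norm_num
  rw [e1, e2]
  have h3 : cntC 1 0 (3:ℤ) m = ∑ k ∈ Finset.range (m+1), cntC 2 1 3 k * Fc (m - k) :=
    chainFH m 3 (by norm_num)
  have h30 : cntC 1 0 (0:ℤ) m = if m = 0 then 1 else 0 := by
    rw [cntC_stuck (by norm_num)]; simp
  have hsh : ∀ k, cntC 2 1 (3:ℤ) k = cntC 1 0 2 k := by
    intro k; simpa using cntC_shift 1 0 1 k 2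
  rw [h3, h30]
  rw [Finset.sum_congr rfl fun k _ => by rw [hsh k, cntC_two k]]
  ring

/-- `bc m`: nonnegative excursions of length `m` (from 0 to 0, staying `≥ 0`). -/
def bc (m : ℕ) : ℕ := cntC 0 0 0 m

lemma bc_succ (m : ℕ) : bc (m+1)
    = ∑ k ∈ Finset.range (m+1), (∑ i ∈ Finset.range (k+1), Fc i * Fc (k - i)) * bc (m - k) := by
  rw [bc, cntC, cnt_succ_of_safe _ _ _ (by simp), tC_true, tC_false]
  simp only [cnt_eq_cntC]
  have e1 : (0:ℤ) + 2 = 2 := by norm_num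
  have e2 : (0:ℤ) - 1 = -1 := by norm_num
  rw [e1, e2]
  have hneg : cntC 0 0 (-1:ℤ) m = 0 := by rw [cntC_stuck (by norm_num)]; simp
  have h2 : cntC 0 0 (2:ℤ) m = ∑ k ∈ Finset.range (m+1), cntC 1 0 2 k * bc (m - k) := by
    have hr := renewal tC (fun x => decide ((0:ℤ) ≤ x)) (0 : ℤ) m 2
    rw [cntC, hr]
    refine Finset.sum_congr rfl fun k _ => ?_
    congr 1
    refine cnt_congr tC (fun q => band_decide (by omega)) k 2
  rw [hneg, h2]
  rw [Finset.sum_congr rfl fun k _ => by rw [cntC_two k]]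
  ring


/-! ### The height function Φ -/

def Phi : ℕ → ℕ → ℕ
  | a, b =>
    if h : 0 < a ∧ a < b then Phi (b - a) a + 2
    else if h' : 0 < b ∧ b < a then Phi b (a - b) + 1
    else 0
termination_by a b => a + b
decreasing_by all_goals omega

lemma Phi_R {a b : ℕ} (ha : 0 < a) (hb : 0 < b) : Phi b (a + b) = Phi a b + 2 := by
  rw [Phi]
  have h : 0 < b ∧ b < a + b := ⟨hb, by omega⟩
  rw [dif_pos h]
  congr 2
  omega

lemma Phi_L1 {a b : ℕ} (hb : 0 < b) (hba : b < a) : Phi a b = Phi b (a - b) + 1 := by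
  rw [Phi]
  rw [dif_neg (by omega), dif_pos ⟨hb, hba⟩]

lemma Phi_L2 {a b : ℕ} (ha : 0 < a) (hab : a < b) : Phi a b = Phi b (b - a) + 1 := by
  conv_lhs => rw [Phi]
  rw [dif_pos ⟨ha, hab⟩]
  conv_rhs => rw [Phi]
  rw [dif_neg (by omega), dif_pos ⟨by omega, by omega⟩]
  have : b - (b - a) = a := by omega
  rw [this]

lemma Phi_eq_zero_iff {a b : ℕ} (ha : 0 < a) (hb : 0 < b) : Phi a b = 0 ↔ a = b := by
  rw [Phi]
  rcases lt_trichotomy a b with h | h | h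
  · rw [dif_pos ⟨ha, h⟩]; simp; omega
  · rw [dif_neg (by omega), dif_neg (by omega)]; simp [h]
  · rw [dif_neg (by omega), dif_pos ⟨hb, h⟩]; simp; omega

/-! ### gcd facts -/

lemma gcd_R {a b : ℕ} : Nat.gcd b (a + b) = Nat.gcd a b := by
  rw [Nat.gcd_add_self_right, Nat.gcd_comm]

lemma gcd_L1 {a b : ℕ} (h : b ≤ a) : Nat.gcd b (a - b) = Nat.gcd a b := by
  calc Nat.gcd b (a - b) = Nat.gcd b (a - b + b) := (Nat.gcd_add_self_right _ _).symm
    _ = Nat.gcd b a := by rw [show a - b + b = a by omega]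
    _ = Nat.gcd a b := Nat.gcd_comm _ _

lemma gcd_L2 {a b : ℕ} (h : a ≤ b) : Nat.gcd b (b - a) = Nat.gcd a b := by
  have h1 : b = a + (b - a) := by omega
  calc Nat.gcd b (b - a) = Nat.gcd (b - a) b := Nat.gcd_comm _ _
    _ = Nat.gcd (b - a) (a + (b - a)) := by rw [← h1]
    _ = Nat.gcd (b - a) a := Nat.gcd_add_self_right _ _
    _ = Nat.gcd a (b - a) := Nat.gcd_comm _ _
    _ = Nat.gcd a (b - a + a)  := (Nat.gcd_add_self_right _ _).symm
    _ = Nat.gcd a b := by rw [show b - a + a = b by omega]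

/-! ### fib-side counting -/

def e11 : ℤ × ℤ → Bool := fun q => decide (q = ((1:ℤ), (1:ℤ)))
def sZ : ℤ × ℤ → Bool := fun q => decide (q.1 ≠ 0)

def cntF (p : ℤ × ℤ) (m : ℕ) : ℕ := cnt fibStep sZ e11 p m

lemma fibStep_true (a b : ℤ) : fibStep (a, b) true = (b, a + b) := rfl
lemma fibStep_false (a b : ℤ) : fibStep (a, b) false = (b, |a - b|) := rfl

lemma cntF_01 (m : ℕ) : cntF ((0:ℤ), (1:ℤ)) m = 0 := by
  cases m with
  | zero => simp [cntF, cnt, e11]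
  | succ m => exact cnt_succ_of_unsafe _ _ _ (by simp [sZ]) m

lemma cntF_10 (m : ℕ) : cntF ((1:ℤ), (0:ℤ)) m = 0 := by
  cases m with
  | zero => simp [cntF, cnt, e11]
  | succ m =>
    rw [cntF, cnt_succ_of_safe _ _ _ (by simp [sZ]) m, fibStep_true, fibStep_false]
    norm_num
    have h1 := cntF_01 m
    rw [cntF] at h1
    omega

lemma cntC_neg (m : ℕ) : cntC 0 0 (-1 : ℤ) m = 0 := by
  rw [cntC_stuck (by norm_num)]; simp

/-- The fundamental count equality: zero-free fib-walks from a coprime positive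
pair `(A, B)` are counted by chain paths from height `Phi A B`. -/
lemma countEq : ∀ m, ∀ A B : ℕ, 0 < A → 0 < B → Nat.gcd A B = 1 →
    cntF ((A:ℤ), (B:ℤ)) m = cntC 0 0 ((Phi A B : ℤ)) m := by
  intro m
  induction m with
  | zero =>
    intro A B hA hB hg
    have hiff : ((( (A:ℤ), (B:ℤ) ) : ℤ × ℤ) = ((1:ℤ), (1:ℤ))) ↔ (((Phi A B : ℕ) : ℤ) = 0) := by
      constructor
      · intro h
        simp only [Prod.mk.injEq] at h
        obtain ⟨h1, h2⟩ := h
        have h1' : A = 1 := by exact_mod_cast h1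
        have h2' : B = 1 := by exact_mod_cast h2
        have : Phi A B = 0 := (Phi_eq_zero_iff hA hB).mpr (by omega)
        exact_mod_cast this
      · intro h
        have hz : Phi A B = 0 := by exact_mod_cast h
        have hab : A = B := (Phi_eq_zero_iff hA hB).mp hz
        have hB1 : B = 1 := by rw [hab] at hg; simpa [Nat.gcd_self] using hg
        have hA1 : A = 1 := by omega
        rw [hA1, hB1]
        norm_num
    simp only [cntF, cnt, cntC, e11]
    simp only [hiff]
  | succ m ih =>
    intro A B hA hB hg
    rw [cntF, cnt_succ_of_safe _ _ _ (by simp [sZ]; omega) m, fibStep_true, fibStep_false]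
    rw [cntC, cnt_succ_of_safe _ _ _ (by simp) m, tC_true, tC_false]
    simp only [cnt_eq_cntC]
    congr 1
    · -- right branch
      have hcast : (A:ℤ) + B = ((A + B : ℕ) : ℤ) := by push_cast; ring
      have hPhi : ((Phi A B : ℤ)) + 2 = ((Phi B (A + B) : ℤ)) := by
        rw [Phi_R hA hB]; push_cast; ring
      rw [hcast, hPhi]
      exact ih B (A + B) hB (by omega) (by rw [gcd_R]; exact hg)
    · -- left branch
      rcases lt_trichotomy A B with h | h | h
      · have hcast : |(A:ℤ) - B| = ((B - A : ℕ) : ℤ) := by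
          rw [abs_sub_comm, abs_of_nonneg (by push_cast; omega)]; push_cast; omega
        have hPhi : ((Phi A B : ℤ)) - 1 = ((Phi B (B - A) : ℤ)) := by
          rw [Phi_L2 hA h]; push_cast; ring
        rw [hcast, hPhi]
        exact ih B (B - A) hB (by omega) (by rw [gcd_L2 (by omega)]; exact hg)
      · -- A = B, so A = B = 1 and the left child is (1, 0)
        have hB1 : B = 1 := by rw [h] at hg; simpa [Nat.gcd_self] using hg
        have hA1 : A = 1 := by omega
        subst hA1; subst hB1
        have hphi : Phi 1 1 = 0 := (Phi_eq_zero_iff (by norm_num) (by norm_num)).mpr rfl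
        rw [hphi]
        norm_num
        rw [cntC_neg]
        exact cntF_10 m
      · have hcast : |(A:ℤ) - B| = ((A - B : ℕ) : ℤ) := by
          rw [abs_of_nonneg (by push_cast; omega)]; push_cast; omega
        have hPhi : ((Phi A B : ℤ)) - 1 = ((Phi B (A - B) : ℤ)) := by
          rw [Phi_L1 hB h]; push_cast; ring
        rw [hcast, hPhi]
        exact ih B (A - B) hB (by omega) (by rw [gcd_L1 (by omega)]; exact hg)


/-! ### Primitive-walk safety predicates -/

def sP : ℤ × ℤ → Bool := fun q => !decide (q = ((1:ℤ), (1:ℤ)))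
def sPZ : ℤ × ℤ → Bool := fun q => sZ q && sP q

lemma renewalF (s : ℤ × ℤ → Bool) : ∀ m p, cnt fibStep s e11 p m
    = ∑ k ∈ Finset.range (m+1),
        cnt fibStep (fun q => s q && sP q) e11 p k * cnt fibStep s e11 ((1:ℤ), (1:ℤ)) (m - k) :=
  renewal fibStep s ((1:ℤ), (1:ℤ))

lemma cntP_11 (k : ℕ) : cnt fibStep sP e11 ((1:ℤ), (1:ℤ)) k = if k = 0 then 1 else 0 := by
  cases k with
  | zero => simp [cnt, e11]
  | succ k => rw [cnt_succ_of_unsafe _ _ _ (by simp [sP]) k]; simp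

lemma step01_true : fibStep ((0:ℤ), (1:ℤ)) true = ((1:ℤ), (1:ℤ)) := by
  rw [fibStep_true]; norm_num
lemma step01_false : fibStep ((0:ℤ), (1:ℤ)) false = ((1:ℤ), (1:ℤ)) := by
  rw [fibStep_false]; norm_num
lemma step10_true : fibStep ((1:ℤ), (0:ℤ)) true = ((0:ℤ), (1:ℤ)) := by
  rw [fibStep_true]; norm_num
lemma step10_false : fibStep ((1:ℤ), (0:ℤ)) false = ((0:ℤ), (1:ℤ)) := by
  rw [fibStep_false]; norm_num

lemma cntP_01 (k : ℕ) : cnt fibStep sP e11 ((0:ℤ), (1:ℤ)) k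
    = if k = 1 then 2 else 0 := by
  cases k with
  | zero => simp [cnt, e11]
  | succ k =>
    rw [cnt_succ_of_safe _ _ _ (by simp [sP]) k, step01_true, step01_false, cntP_11 k]
    rcases k with _ | k <;> simp

lemma cntP_10 (k : ℕ) : cnt fibStep sP e11 ((1:ℤ), (0:ℤ)) k
    = if k = 2 then 4 else 0 := by
  cases k with
  | zero => simp [cnt, e11]
  | succ k =>
    rw [cnt_succ_of_safe _ _ _ (by simp [sP]) k, step10_true, step10_false, cntP_01 k]
    rcases k with _ | _ | k <;> simp

lemma cntPZ_01 (k : ℕ) : cnt fibStep sPZ e11 ((0:ℤ), (1:ℤ)) k = 0 := by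
  cases k with
  | zero => simp [cnt, e11]
  | succ k => rw [cnt_succ_of_unsafe _ _ _ (by simp [sPZ, sZ]) k]

lemma cntPZ_10 (k : ℕ) : cnt fibStep sPZ e11 ((1:ℤ), (0:ℤ)) k = 0 := by
  cases k with
  | zero => simp [cnt, e11]
  | succ k =>
    rw [cnt_succ_of_safe _ _ _ (by simp [sPZ, sZ, sP, e11]) k, step10_true, step10_false,
      cntPZ_01 k]

/-- On walks from good pairs, primitivity already forces zero-freeness. -/
lemma cntP_eq_cntPZ : ∀ m, ∀ A B : ℕ, 0 < A → 0 < B → Nat.gcd A B = 1 →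
    cnt fibStep sP e11 ((A:ℤ), (B:ℤ)) m = cnt fibStep sPZ e11 ((A:ℤ), (B:ℤ)) m := by
  intro m
  induction m with
  | zero => intro A B _ _ _; rfl
  | succ m ih =>
    intro A B hA hB hg
    by_cases hI : (((A:ℤ), (B:ℤ)) : ℤ × ℤ) = ((1:ℤ), (1:ℤ))
    · rw [cnt_succ_of_unsafe _ _ _ (by simp [sP, hI]) m,
        cnt_succ_of_unsafe _ _ _ (by simp [sPZ, sP, hI]) m]
    · have hAB : ¬(A = 1 ∧ B = 1) := by
        rintro ⟨h1, h2⟩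
        exact hI (by rw [h1, h2]; norm_num)
      rw [cnt_succ_of_safe _ _ _ (by simp [sP]; omega) m,
        cnt_succ_of_safe _ _ _ (by simp [sPZ, sP, sZ]; omega) m,
        fibStep_true, fibStep_false]
      congr 1
      · have hcast : (A:ℤ) + B = ((A + B : ℕ) : ℤ) := by push_cast; ring
        rw [hcast]
        exact ih B (A + B) hB (by omega) (by rw [gcd_R]; exact hg)
      · rcases lt_trichotomy A B with h | h | h
        · have hcast : |(A:ℤ) - B| = ((B - A : ℕ) : ℤ) := by
            rw [abs_sub_comm, abs_of_nonneg (by push_cast; omega)]; push_cast; omega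
          rw [hcast]
          exact ih B (B - A) hB (by omega) (by rw [gcd_L2 (by omega)]; exact hg)
        · exfalso
          have hB1 : B = 1 := by rw [h] at hg; simpa [Nat.gcd_self] using hg
          have hA1 : A = 1 := by omega
          exact hI (by rw [hA1, hB1]; norm_num)
        · have hcast : |(A:ℤ) - B| = ((A - B : ℕ) : ℤ) := by
            rw [abs_of_nonneg (by push_cast; omega)]; push_cast; omega
          rw [hcast]
          exact ih B (A - B) hB (by omega) (by rw [gcd_L1 (by omega)]; exact hg)

/-! ### The main fib-side sequences -/

def aseq (m : ℕ) : ℕ := cnt fibStep (fun _ => true) e11 ((1:ℤ), (1:ℤ)) m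
def bseq (m : ℕ) : ℕ := cntF ((1:ℤ), (1:ℤ)) m
def useq (k : ℕ) : ℕ :=
  cnt fibStep sP e11 ((1:ℤ), (2:ℤ)) k + cnt fibStep sP e11 ((1:ℤ), (0:ℤ)) k
def vseq (k : ℕ) : ℕ :=
  cnt fibStep sPZ e11 ((1:ℤ), (2:ℤ)) k + cnt fibStep sPZ e11 ((1:ℤ), (0:ℤ)) k

lemma step11_true : fibStep ((1:ℤ), (1:ℤ)) true = ((1:ℤ), (2:ℤ)) := by
  rw [fibStep_true]; norm_num

lemma step11_false : fibStep ((1:ℤ), (1:ℤ)) false = ((1:ℤ), (0:ℤ)) := by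
  rw [fibStep_false]; norm_num

lemma useq_eq_vseq (k : ℕ) : useq k = vseq k + (if k = 2 then 4 else 0) := by
  have h12 := cntP_eq_cntPZ k 1 2 (by norm_num) (by norm_num) (by norm_num)
  push_cast at h12
  rw [useq, vseq, h12, cntP_10, cntPZ_10]
  ring

lemma aseq_zero : aseq 0 = 1 := by simp [aseq, cnt, e11]
lemma bseq_zero : bseq 0 = 1 := by simp [bseq, cntF, cnt, e11]

lemma aseq_succ (m : ℕ) : aseq (m+1) = ∑ k ∈ Finset.range (m+1), useq k * aseq (m - k) := by
  rw [aseq, cnt_succ_of_safe _ _ _ rfl m, step11_true, step11_false,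
    renewalF _ m ((1:ℤ), (2:ℤ)), renewalF _ m ((1:ℤ), (0:ℤ))]
  rw [← Finset.sum_add_distrib]
  refine Finset.sum_congr rfl fun k _ => ?_
  rw [← add_mul]
  congr 1

lemma bseq_succ (m : ℕ) : bseq (m+1) = ∑ k ∈ Finset.range (m+1), vseq k * bseq (m - k) := by
  rw [bseq, cntF, cnt_succ_of_safe _ _ _ (by simp [sZ]) m, step11_true, step11_false,
    renewalF _ m ((1:ℤ), (2:ℤ)), renewalF _ m ((1:ℤ), (0:ℤ))]
  rw [← Finset.sum_add_distrib]
  refine Finset.sum_congr rfl fun k _ => ?_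
  rw [← add_mul]
  rfl


/-! ### Trajectories -/

def traj (t : σ → Bool → σ) (p : σ) (w : ℕ → Bool) : ℕ → σ
  | 0 => p
  | i+1 => t (traj t p w i) (w i)

omit [DecidableEq σ] in
lemma traj_congr (t : σ → Bool → σ) (p : σ) {w w' : ℕ → Bool} :
    ∀ i, (∀ j, j < i → w j = w' j) → traj t p w i = traj t p w' i := by
  intro i
  induction i with
  | zero => intro _; rfl
  | succ i ih =>
    intro h
    show t (traj t p w i) (w i) = t (traj t p w' i) (w' i)
    rw [ih (fun j hj => h j (by omega)), h i (by omega)]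

omit [DecidableEq σ] in
lemma traj_shift (t : σ → Bool → σ) (p : σ) (w : ℕ → Bool) :
    ∀ i, traj t p w (i+1) = traj t (t p (w 0)) (fun j => w (j+1)) i := by
  intro i
  induction i with
  | zero => rfl
  | succ i ih =>
    show t (traj t p w (i+1)) (w (i+1)) = t (traj t (t p (w 0)) (fun j => w (j+1)) i) _
    rw [ih]

lemma extendW_succ {m : ℕ} (w : Fin (m+1) → Bool) (j : ℕ) :
    extendW w (j+1) = extendW (Fin.tail w) j := by
  unfold extendW
  rcases lt_or_ge j m with h | h
  · rw [dif_pos (by omega), dif_pos h]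
    rfl
  · rw [dif_neg (by omega), dif_neg (by omega)]

lemma extendW_zero {m : ℕ} (w : Fin (m+1) → Bool) : extendW w 0 = w 0 := by
  unfold extendW
  rw [dif_pos (by omega)]
  exact congrArg w (Fin.ext (by simp))

/-! ### Cardinality lemmas -/

open Classical in
lemma card_fin_zero (P : (Fin 0 → Bool) → Prop) :
    Nat.card {w : Fin 0 → Bool // P w} = if P (fun i => i.elim0) then 1 else 0 := by
  by_cases h : P (fun i => i.elim0)
  · rw [if_pos h]
    have : Unique {w : Fin 0 → Bool // P w} := by
      refine ⟨⟨⟨fun i => i.elim0, h⟩⟩, ?_⟩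
      rintro ⟨w, hw⟩
      apply Subtype.ext
      funext i
      exact i.elim0
    exact Nat.card_unique
  · rw [if_neg h]
    have : IsEmpty {w : Fin 0 → Bool // P w} := by
      refine ⟨?_⟩
      rintro ⟨w, hw⟩
      apply h
      have : w = (fun i => i.elim0) := by funext i; exact i.elim0
      rwa [this] at hw
    exact Nat.card_of_isEmpty

/-- Splitting a counted family of branch sequences at the first branch. -/
lemma card_split {m : ℕ} (C : Bool → (Fin m → Bool) → Prop) :
    Nat.card {w : Fin (m+1) → Bool // C (w 0) (Fin.tail w)}
      = Nat.card {v : Fin m → Bool // C true v} + Nat.card {v : Fin m → Bool // C false v} := by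
  have e1 : {w : Fin (m+1) → Bool // C (w 0) (Fin.tail w)} ≃ (Σ b : Bool, {v : Fin m → Bool // C b v}) :=
    { toFun := fun x => ⟨x.1 0, ⟨Fin.tail x.1, x.2⟩⟩
      invFun := fun x => ⟨Fin.cons x.1 x.2.1, by
        have h1 : (Fin.cons x.1 x.2.1 : Fin (m+1) → Bool) 0 = x.1 := Fin.cons_zero _ _
        have h2 : Fin.tail (Fin.cons x.1 x.2.1 : Fin (m+1) → Bool) = x.2.1 := Fin.tail_cons _ _
        rw [h1, h2]
        exact x.2.2⟩
      left_inv := fun x => Subtype.ext (Fin.cons_self_tail x.1)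
      right_inv := fun x => by
        rcases x with ⟨b, v, hv⟩
        have h1 : (Fin.cons b v : Fin (m+1) → Bool) 0 = b := Fin.cons_zero _ _
        have h2 : Fin.tail (Fin.cons b v : Fin (m+1) → Bool) = v := Fin.tail_cons _ _
        exact Sigma.subtype_ext h1 h2 }
  have e2 : (Σ b : Bool, {v : Fin m → Bool // C b v})
      ≃ ({v : Fin m → Bool // C true v} ⊕ {v : Fin m → Bool // C false v}) :=
    { toFun := fun x => match x with
        | ⟨true, y⟩ => Sum.inl y
        | ⟨false, y⟩ => Sum.inr y
      invFun := fun x => match x with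
        | Sum.inl y => ⟨true, y⟩
        | Sum.inr y => ⟨false, y⟩
      left_inv := fun x => by rcases x with ⟨b, y⟩; cases b <;> rfl
      right_inv := fun x => by cases x <;> rfl }
  rw [Nat.card_congr (e1.trans e2), Nat.card_sum]

/-- The master translation: subtype cardinality equals the recursive count. -/
lemma cardT (t : σ → Bool → σ) (s e : σ → Bool) :
    ∀ m p, Nat.card {w : Fin m → Bool //
        e (traj t p (extendW w) m) = true ∧ ∀ i, i < m → s (traj t p (extendW w) i) = true}
      = cnt t s e p m := by
  intro m
  induction m with
  | zero =>
    intro p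
    rw [card_fin_zero]
    by_cases he : e p = true
    · rw [if_pos (by exact ⟨he, fun i hi => absurd hi (by omega)⟩)]
      simp [cnt, he]
    · rw [if_neg (by rintro ⟨h1, _⟩; exact he h1)]
      simp only [cnt]
      rw [if_neg he]
  | succ m ih =>
    intro p
    have hiff : ∀ w : Fin (m+1) → Bool,
        (e (traj t p (extendW w) (m+1)) = true ∧
          ∀ i, i < m+1 → s (traj t p (extendW w) i) = true)
        ↔ (s p = true ∧
            (e (traj t (t p (w 0)) (extendW (Fin.tail w)) m) = true ∧
              ∀ i, i < m → s (traj t (t p (w 0)) (extendW (Fin.tail w)) i) = true)) := by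
      intro w
      have hsh : ∀ i, traj t p (extendW w) (i+1)
          = traj t (t p (w 0)) (extendW (Fin.tail w)) i := by
        intro i
        rw [traj_shift, extendW_zero]
        exact traj_congr t _ i (fun j _ => extendW_succ w j)
      constructor
      · rintro ⟨h1, h2⟩
        refine ⟨h2 0 (by omega), ?_, ?_⟩
        · rw [← hsh m]; exact h1
        · intro i hi; rw [← hsh i]; exact h2 (i+1) (by omega)
      · rintro ⟨h0, h1, h2⟩
        constructor
        · rw [hsh m]; exact h1
        · intro i hi
          cases i with
          | zero => exact h0
          | succ i => rw [hsh i]; exact h2 i (by omega)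
    rw [Nat.card_congr (Equiv.subtypeEquivRight hiff)]
    by_cases hs : s p = true
    · have : ∀ w : Fin (m+1) → Bool, (s p = true ∧
            (e (traj t (t p (w 0)) (extendW (Fin.tail w)) m) = true ∧
              ∀ i, i < m → s (traj t (t p (w 0)) (extendW (Fin.tail w)) i) = true))
          ↔ (fun (b : Bool) (v : Fin m → Bool) =>
              e (traj t (t p b) (extendW v) m) = true ∧
              ∀ i, i < m → s (traj t (t p b) (extendW v) i) = true) (w 0) (Fin.tail w) := by
        intro w
        simp only [hs, true_and]
      rw [Nat.card_congr (Equiv.subtypeEquivRight this),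
        card_split (C := fun (b : Bool) (v : Fin m → Bool) =>
          e (traj t (t p b) (extendW v) m) = true ∧
          ∀ i, i < m → s (traj t (t p b) (extendW v) i) = true)]
      show Nat.card {v : Fin m → Bool //
          e (traj t (t p true) (extendW v) m) = true ∧
          ∀ i, i < m → s (traj t (t p true) (extendW v) i) = true}
        + Nat.card {v : Fin m → Bool //
          e (traj t (t p false) (extendW v) m) = true ∧
          ∀ i, i < m → s (traj t (t p false) (extendW v) i) = true} = _
      rw [ih, ih]
      simp [cnt, hs]
    · have hempty : ∀ w : Fin (m+1) → Bool, ¬ (s p = true ∧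
            (e (traj t (t p (w 0)) (extendW (Fin.tail w)) m) = true ∧
              ∀ i, i < m → s (traj t (t p (w 0)) (extendW (Fin.tail w)) i) = true)) := by
        rintro w ⟨h0, _⟩; exact hs h0
      have hie : IsEmpty {w : Fin (m+1) → Bool // s p = true ∧
            (e (traj t (t p (w 0)) (extendW (Fin.tail w)) m) = true ∧
              ∀ i, i < m → s (traj t (t p (w 0)) (extendW (Fin.tail w)) i) = true)} :=
        ⟨fun x => hempty x.1 x.2⟩
      rw [Nat.card_of_isEmpty]
      simp only [cnt]
      rw [if_neg (by simpa using hs)]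


/-! ### Bridge: the zero-free fib count equals the excursion count -/

lemma bseq_eq_bc (m : ℕ) : bseq m = bc m := by
  have h := countEq m 1 1 one_pos one_pos (by norm_num)
  have hphi : Phi 1 1 = 0 := (Phi_eq_zero_iff one_pos one_pos).mpr rfl
  rw [hphi] at h
  push_cast at h
  exact h

lemma bseq_succ2 (m : ℕ) : bseq (m+1)
    = ∑ k ∈ Finset.range (m+1), (∑ i ∈ Finset.range (k+1), Fc i * Fc (k - i)) * bseq (m - k) := by
  rw [bseq_eq_bc, bc_succ]
  exact Finset.sum_congr rfl fun k _ => by rw [bseq_eq_bc]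

lemma Fc_zero : Fc 0 = 0 := by simp [Fc, cntC, cnt]

open PowerSeries

noncomputable def PS (f : ℕ → ℕ) : PowerSeries ℤ := PowerSeries.mk fun m => (f m : ℤ)

lemma coeff_PS (f : ℕ → ℕ) (n : ℕ) : (coeff n) (PS f) = (f n : ℤ) := by
  simp [PS]

lemma coeff_mul_range (φ ψ : PowerSeries ℤ) (n : ℕ) :
    (coeff n) (φ * ψ) = ∑ k ∈ Finset.range (n+1), (coeff k) φ * (coeff (n - k)) ψ := by
  rw [PowerSeries.coeff_mul, Finset.Nat.sum_antidiagonal_eq_sum_range_succ_mk]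

lemma constCoeff_PS (f : ℕ → ℕ) : (constantCoeff) (PS f) = (f 0 : ℤ) := by
  simp [PS]

lemma PS_ne_zero {f : ℕ → ℕ} (h : f 0 = 1) : PS f ≠ 0 := by
  intro h0
  have := constCoeff_PS f
  rw [h0, h] at this
  simp at this

/-- `A = 1 + X U A`. -/
lemma hPA : PS aseq = 1 + X * (PS useq * PS aseq) := by
  ext n
  cases n with
  | zero =>
    simp [coeff_PS, aseq_zero, PowerSeries.coeff_zero_eq_constantCoeff]
  | succ m =>
    rw [map_add, PowerSeries.coeff_succ_X_mul, coeff_PS, coeff_mul_range]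
    have h1 : (coeff (m+1)) (1 : PowerSeries ℤ) = 0 := by
      rw [PowerSeries.coeff_one]; simp
    rw [h1, aseq_succ m]
    push_cast
    simp [coeff_PS]

lemma hPB : PS bseq = 1 + X * (PS vseq * PS bseq) := by
  ext n
  cases n with
  | zero =>
    simp [coeff_PS, bseq_zero, PowerSeries.coeff_zero_eq_constantCoeff]
  | succ m =>
    rw [map_add, PowerSeries.coeff_succ_X_mul, coeff_PS, coeff_mul_range]
    have h1 : (coeff (m+1)) (1 : PowerSeries ℤ) = 0 := by
      rw [PowerSeries.coeff_one]; simp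
    rw [h1, bseq_succ m]
    push_cast
    simp [coeff_PS]

lemma hPU : PS useq = PS vseq + C 4 * X^2 := by
  ext n
  rw [map_add, coeff_PS, coeff_PS, PowerSeries.coeff_C_mul, PowerSeries.coeff_X_pow,
    useq_eq_vseq n]
  push_cast
  by_cases h2 : n = 2 <;> simp [h2]

lemma hPBc : PS bseq = 1 + X * ((PS Fc * PS Fc) * PS bseq) := by
  ext n
  cases n with
  | zero =>
    simp [coeff_PS, bseq_zero, PowerSeries.coeff_zero_eq_constantCoeff]
  | succ m =>
    rw [map_add, PowerSeries.coeff_succ_X_mul, coeff_PS, coeff_mul_range]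
    have h1 : (coeff (m+1)) (1 : PowerSeries ℤ) = 0 := by
      rw [PowerSeries.coeff_one]; simp
    rw [h1, bseq_succ2 m]
    simp only [coeff_mul_range, coeff_PS]
    push_cast
    simp

lemma hPF : PS Fc = X + X * ((PS Fc * PS Fc) * PS Fc) := by
  ext n
  cases n with
  | zero =>
    simp [coeff_PS, Fc_zero, PowerSeries.coeff_zero_eq_constantCoeff]
  | succ m =>
    rw [map_add, PowerSeries.coeff_succ_X_mul, coeff_PS, coeff_mul_range, PowerSeries.coeff_X,
      Fc_succ m]
    simp only [coeff_mul_range, coeff_PS]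
    push_cast
    by_cases h0 : m = 0 <;> simp [h0]

/-! ### Power-series algebra -/

lemma ne_zero_one_sub_X_mul (φ : PowerSeries ℤ) : (1 : PowerSeries ℤ) - X * φ ≠ 0 := by
  intro h
  have := congrArg (constantCoeff) h
  simp [map_sub, map_mul] at this

lemma hG : (1 - 16*X^3 + 64*X^6) * PS aseq = PS bseq + 4*(X*PS useq) - 32*X^3 := by
  set A := PS aseq
  set B := PS bseq
  set U := PS useq
  set V := PS vseq
  set F := PS Fc
  have hA1 : A * (1 - X*U) = 1 := by linear_combination hPA
  have hB1 : B * (1 - X*V) = 1 := by linear_combination hPB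
  have hU4 : U = V + C 4 * X^2 := hPU
  have hU4' : U = V + 4*X^2 := by
    rw [hU4, map_ofNat]
  have hkey : (A - B - 4*X^3*(A*B)) * (1 - X*U) = 0 := by
    linear_combination (1 - 4*X^3*B) * hA1 - hB1 + X*B*hU4'
  have hR1 : A = B + 4*X^3*(A*B) := by
    rcases mul_eq_zero.mp hkey with h | h
    · linear_combination h
    · exact absurd h (ne_zero_one_sub_X_mul U)
  -- chain algebra
  have hFXB : F = X * B := by
    have hkey2 : (F - X*B) * (1 - X*(F*F)) = 0 := by
      linear_combination hPF - X * hPBc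
    rcases mul_eq_zero.mp hkey2 with h | h
    · linear_combination h
    · exact absurd h (ne_zero_one_sub_X_mul (F*F))
  have hB3 : B = 1 + X^3*B^3 := by
    linear_combination hPBc + X*B*(F + X*B)*hFXB
  -- the main identity, multiplied by the unit A * (1 - 4 X^3 B)^2
  have hT : ((1 - 16*X^3 + 64*X^6)*A - B - 4*(X*U) + 32*X^3) * (A * (1 - 4*X^3*B)^2) = 0 := by
    linear_combination (4*(1-4*X^3*B)^2) * hA1
      + ((1-16*X^3+64*X^6)*(B + A*(1-4*X^3*B)) - (B+4-32*X^3)*(1-4*X^3*B)) * hR1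
      - 4*hB3
  have hfac : A * (1 - 4*X^3*B)^2 ≠ 0 := by
    apply mul_ne_zero
    · exact PS_ne_zero aseq_zero
    · apply pow_ne_zero
      intro h
      have := congrArg (constantCoeff) h
      simp [map_sub, map_mul, map_pow, constCoeff_PS] at this
  rcases mul_eq_zero.mp hT with h | h
  · linear_combination h
  · exact absurd h hfac

lemma main_coeff (n : ℕ) : (aseq (3*n+6) : ℤ) + 64*(aseq (3*n) : ℤ)
    = 16*(aseq (3*n+3) : ℤ) + (bseq (3*n+6) : ℤ) + 4*(useq (3*n+5) : ℤ) := by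
  have hG2 : PS aseq + C 64 * (X^6 * PS aseq) + C 32 * X^3
      = C 16 * (X^3 * PS aseq) + PS bseq + C 4 * (X * PS useq) := by
    simp only [map_ofNat]
    linear_combination hG
  have e1 : (coeff (3*n+6)) (X^6 * PS aseq) = (aseq (3*n) : ℤ) := by
    rw [PowerSeries.coeff_X_pow_mul, coeff_PS]
  have e2 : (coeff (3*n+6)) (X^3 * PS aseq) = (aseq (3*n+3) : ℤ) := by
    rw [show 3*n+6 = 3*n+3+3 by ring, PowerSeries.coeff_X_pow_mul, coeff_PS]
  have e3 : (coeff (3*n+6)) (X * PS useq) = (useq (3*n+5) : ℤ) := by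
    rw [show 3*n+6 = 3*n+5+1 by ring, PowerSeries.coeff_succ_X_mul, coeff_PS]
  have e4 : (coeff (3*n+6)) (X^3 : PowerSeries ℤ) = 0 := by
    rw [PowerSeries.coeff_X_pow, if_neg (by omega)]
  have hco := congrArg (coeff (3*n+6)) hG2
  rw [map_add, map_add, map_add, map_add, PowerSeries.coeff_C_mul, PowerSeries.coeff_C_mul,
    PowerSeries.coeff_C_mul, PowerSeries.coeff_C_mul, e1, e2, e3, e4, coeff_PS, coeff_PS] at hco
  linarith [hco]


/-! ### Instantiation of the counting lemmas -/

lemma fibPairs_traj (w : ℕ → Bool) : ∀ i, fibPairs w i = traj fibStep ((1:ℤ), (1:ℤ)) w i := by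
  intro i
  induction i with
  | zero => rfl
  | succ i ih => show fibStep (fibPairs w i) (w i) = fibStep (traj fibStep _ w i) (w i); rw [ih]

lemma extendW_ge {m : ℕ} (w : Fin m → Bool) {i : ℕ} (h : m ≤ i) : extendW w i = false := by
  unfold extendW
  rw [dif_neg (by omega)]

lemma A11_eq (n : ℕ) : A11 n = aseq (3*n) := by
  unfold A11
  have hiff : ∀ w : Fin (3*n) → Bool, (endPair w = (1, 1)) ↔
      (e11 (traj fibStep ((1:ℤ), (1:ℤ)) (extendW w) (3*n)) = true ∧
        ∀ i, i < 3*n → (fun _ : ℤ × ℤ => true) (traj fibStep ((1:ℤ), (1:ℤ)) (extendW w) i) = true) := by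
    intro w
    rw [endPair, fibPairs_traj]
    simp [e11]
  rw [Nat.card_congr (Equiv.subtypeEquivRight hiff),
    cardT fibStep (fun _ : ℤ × ℤ => true) e11 (3*n) ((1:ℤ), (1:ℤ))]
  rfl

lemma Bnz_eq (n : ℕ) : Bnz n = bseq (3*n) := by
  unfold Bnz
  have hiff : ∀ w : Fin (3*n) → Bool,
      (endPair w = (1, 1) ∧ ∀ i, i ≤ 3*n + 1 → (fibPairs (extendW w) i).1 ≠ 0) ↔
      (e11 (traj fibStep ((1:ℤ), (1:ℤ)) (extendW w) (3*n)) = true ∧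
        ∀ i, i < 3*n → sZ (traj fibStep ((1:ℤ), (1:ℤ)) (extendW w) i) = true) := by
    intro w
    constructor
    · rintro ⟨h1, h2⟩
      constructor
      · rw [← fibPairs_traj, ← endPair]; simp [e11, h1]
      · intro i hi
        have := h2 i (by omega)
        rw [fibPairs_traj] at this
        simpa [sZ] using this
    · rintro ⟨h1, h2⟩
      have hend : fibPairs (extendW w) (3*n) = (1, 1) := by
        rw [fibPairs_traj]
        simpa [e11] using h1
      constructor
      · rw [endPair, hend]
      · intro i hi
        rcases lt_or_ge i (3*n) with h | h
        · have := h2 i h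
          rw [← fibPairs_traj] at this
          simpa [sZ] using this
        · rcases Nat.eq_or_lt_of_le h with h' | h'
          · rw [← h', hend]; norm_num
          · have hi1 : i = 3*n + 1 := by omega
            have : fibPairs (extendW w) (3*n+1)
                = fibStep (fibPairs (extendW w) (3*n)) (extendW w (3*n)) := rfl
            rw [hi1, this, hend, extendW_ge w (by omega), fibStep_false]
            norm_num
  rw [Nat.card_congr (Equiv.subtypeEquivRight hiff),
    cardT fibStep sZ e11 (3*n) ((1:ℤ), (1:ℤ))]
  rfl

lemma Sprim_eq (n : ℕ) : Sprim (n+2) = useq (3*n+5) := by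
  unfold Sprim
  rw [show 3*(n+2) = 3*n+6 from by ring]
  have hiff : ∀ w : Fin (3*n+6) → Bool,
      (endPair w = (1, 1) ∧ ∀ i, 1 ≤ i → i ≤ 3*n+6 - 1 → fibPairs (extendW w) i ≠ (1, 1)) ↔
      (fun (b : Bool) (v : Fin (3*n+5) → Bool) =>
        e11 (traj fibStep (fibStep ((1:ℤ), (1:ℤ)) b) (extendW v) (3*n+5)) = true ∧
        ∀ j, j < 3*n+5 →
          sP (traj fibStep (fibStep ((1:ℤ), (1:ℤ)) b) (extendW v) j) = true) (w 0) (Fin.tail w) := by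
    intro w
    have hsh : ∀ i, traj fibStep ((1:ℤ), (1:ℤ)) (extendW w) (i+1)
        = traj fibStep (fibStep ((1:ℤ), (1:ℤ)) (w 0)) (extendW (Fin.tail w)) i := by
      intro i
      rw [traj_shift, extendW_zero]
      exact traj_congr fibStep _ i (fun j _ => extendW_succ w j)
    have hm : (3*n+6 : ℕ) - 1 = 3*n+5 := by omega
    constructor
    · rintro ⟨h1, h2⟩
      constructor
      · rw [← hsh (3*n+5)]
        have : endPair w = fibPairs (extendW w) (3*n+6) := rfl
        rw [this, fibPairs_traj] at h1
        simpa [e11] using h1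
      · intro j hj
        have := h2 (j+1) (by omega) (by omega)
        rw [fibPairs_traj, hsh j] at this
        simpa [sP] using this
    · rintro ⟨h1, h2⟩
      constructor
      · show fibPairs (extendW w) (3*n+6) = (1,1)
        rw [fibPairs_traj, hsh (3*n+5)]
        simpa [e11] using h1
      · intro i hi1 hi2
        rw [hm] at hi2
        obtain ⟨j, rfl⟩ : ∃ j, i = j + 1 := ⟨i - 1, by omega⟩
        have := h2 j (by omega)
        rw [fibPairs_traj, hsh j]
        simpa [sP] using this
  rw [Nat.card_congr (Equiv.subtypeEquivRight hiff),
    card_split (C := fun (b : Bool) (v : Fin (3*n+5) → Bool) =>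
      e11 (traj fibStep (fibStep ((1:ℤ), (1:ℤ)) b) (extendW v) (3*n+5)) = true ∧
      ∀ j, j < 3*n+5 →
        sP (traj fibStep (fibStep ((1:ℤ), (1:ℤ)) b) (extendW v) j) = true)]
  show Nat.card {v : Fin (3*n+5) → Bool //
      e11 (traj fibStep (fibStep ((1:ℤ), (1:ℤ)) true) (extendW v) (3*n+5)) = true ∧
      ∀ j, j < 3*n+5 → sP (traj fibStep (fibStep ((1:ℤ), (1:ℤ)) true) (extendW v) j) = true}
    + Nat.card {v : Fin (3*n+5) → Bool //
      e11 (traj fibStep (fibStep ((1:ℤ), (1:ℤ)) false) (extendW v) (3*n+5)) = true ∧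
      ∀ j, j < 3*n+5 → sP (traj fibStep (fibStep ((1:ℤ), (1:ℤ)) false) (extendW v) j) = true} = _
  rw [cardT, cardT, step11_true, step11_false]
  rfl

end FibAux

/-- For every `n ≥ 0`, `A(n+2) − 16·A(n+1) + 64·A(n) = B(n+2) + 4·S(n+2)`. -/
theorem A11_second_recurrence (n : ℕ) :
    (A11 (n + 2) : ℤ) - 16 * A11 (n + 1) + 64 * A11 n
      = (Bnz (n + 2) : ℤ) + 4 * Sprim (n + 2) := by
  have hA2 : A11 (n+2) = FibAux.aseq (3*n+6) := by
    rw [FibAux.A11_eq, show 3*(n+2) = 3*n+6 from by ring]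
  have hA1 : A11 (n+1) = FibAux.aseq (3*n+3) := by
    rw [FibAux.A11_eq, show 3*(n+1) = 3*n+3 from by ring]
  have hA0 : A11 n = FibAux.aseq (3*n) := FibAux.A11_eq n
  have hB2 : Bnz (n+2) = FibAux.bseq (3*n+6) := by
    rw [FibAux.Bnz_eq, show 3*(n+2) = 3*n+6 from by ring]
  have hS2 : Sprim (n+2) = FibAux.useq (3*n+5) := FibAux.Sprim_eq n
  rw [hA2, hA1, hA0, hB2, hS2]
  have := FibAux.main_coeff n
  linarith
end
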